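/- arXiv:2508.09341 — 14 statements merged into one kernel-verified Lean document; each statement's English description precedes it below -/
import Mathlib

section
/- Let Γ be a finite simple graph and let u and v be distinct adjacent vertices of Γ. If u and v are adjacent to exactly the same set of vertices in VΓ \ {u, v}, then Lights Out is not universally solvable on Γ (i.e., the neighborhood matrix of Γ over 𝔽₂ is not invertible). -/
open scoped Classical in
/-- The neighborhood matrix of a finite simple graph over the field `ZMod 2`:
the entry at `(i, j)` is `1` if `i = j` or `i` and `j` are adjacent, and `0` otherwise. -/
noncomputable def nbhdMatrix {V : Type} [Fintype V] [DecidableEq V] (G : SimpleGraph V) :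
    Matrix V V (ZMod 2) :=
  Matrix.of fun i j => if i = j ∨ G.Adj i j then 1 else 0

/-- Lights Out is universally solvable on a finite simple graph iff its neighborhood
matrix over `ZMod 2` is invertible. -/
def UniversallySolvable {V : Type} [Fintype V] [DecidableEq V] (G : SimpleGraph V) : Prop :=
  IsUnit (nbhdMatrix G)

namespace SimpleGraph

variable {V : Type} (G : SimpleGraph V)

theorem eq_or_adj_iff_of_adj_of_forall_adj_iff {u v : V} (hadj : G.Adj u v)
    (hsame : ∀ w : V, w ≠ u → w ≠ v → (G.Adj u w ↔ G.Adj v w)) (w : V) :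
    u = w ∨ G.Adj u w ↔ v = w ∨ G.Adj v w := by
  by_cases hwu : w = u
  · subst hwu
    simp [hadj.symm]
  by_cases hwv : w = v
  · subst hwv
    simp [hadj]
  simp only [Ne.symm hwu, Ne.symm hwv, false_or]
  exact hsame w hwu hwv

theorem nbhdMatrix_row_eq_of_adj_of_forall_adj_iff [Fintype V] [DecidableEq V] {u v : V}
    (hadj : G.Adj u v) (hsame : ∀ w : V, w ≠ u → w ≠ v → (G.Adj u w ↔ G.Adj v w)) :
    nbhdMatrix G u = nbhdMatrix G v := by
  funext w
  simp only [nbhdMatrix, Matrix.of_apply]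
  congr 1
  exact propext (G.eq_or_adj_iff_of_adj_of_forall_adj_iff hadj hsame w)

end SimpleGraph

theorem not_universallySolvable_of_same_adjacency_general {V : Type} [Fintype V] [DecidableEq V]
    (G : SimpleGraph V) (u v : V) (hadj : G.Adj u v)
    (hsame : ∀ w : V, w ≠ u → w ≠ v → (G.Adj u w ↔ G.Adj v w)) :
    ¬ UniversallySolvable G := by
  rw [UniversallySolvable, Matrix.isUnit_iff_isUnit_det,
    Matrix.det_zero_of_row_eq hadj.ne (G.nbhdMatrix_row_eq_of_adj_of_forall_adj_iff hadj hsame)]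
  exact not_isUnit_zero

/-- If distinct adjacent vertices `u` and `v` of a finite simple graph `Γ` are adjacent to
exactly the same set of vertices in `VΓ \ {u, v}`, then Lights Out is not universally
solvable on `Γ`. -/
theorem not_universallySolvable_of_same_adjacency {V : Type} [Fintype V] [DecidableEq V]
    (G : SimpleGraph V) (u v : V) (huv : u ≠ v) (hadj : G.Adj u v)
    (hsame : ∀ w : V, w ≠ u → w ≠ v → (G.Adj u w ↔ G.Adj v w)) :
    ¬ UniversallySolvable G :=
  not_universallySolvable_of_same_adjacency_general G u v hadj hsame
end

section
/- If a finite simple graph Γ has two distinct dominating vertices, then Lights Out is not universally solvable on Γ (i.e., the neighborhood matrix of Γ over 𝔽₂ is not invertible). -/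
section Dominating

variable {V : Type} [Fintype V] [DecidableEq V] {G : SimpleGraph V} {u : V}

theorem nbhdMatrix_apply_of_dominating (hu : ∀ w : V, w ≠ u → G.Adj u w) (k : V) :
    nbhdMatrix G k u = 1 := by
  rcases eq_or_ne k u with rfl | hk
  · simp [nbhdMatrix]
  · simp [nbhdMatrix, (hu k hk).symm]

theorem det_nbhdMatrix_eq_zero_of_two_dominating {v : V} (huv : u ≠ v)
    (hu : ∀ w : V, w ≠ u → G.Adj u w) (hv : ∀ w : V, w ≠ v → G.Adj v w) :
    (nbhdMatrix G).det = 0 :=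
  Matrix.det_zero_of_column_eq huv fun k => by
    rw [nbhdMatrix_apply_of_dominating hu, nbhdMatrix_apply_of_dominating hv]

end Dominating

/-- If a finite simple graph `Γ` has two distinct dominating vertices, then Lights Out
is not universally solvable on `Γ`. -/
theorem not_universallySolvable_of_two_dominating {V : Type} [Fintype V] [DecidableEq V]
    (G : SimpleGraph V) (u v : V) (huv : u ≠ v)
    (hu : ∀ w : V, w ≠ u → G.Adj u w) (hv : ∀ w : V, w ≠ v → G.Adj v w) :
    ¬ UniversallySolvable G := by
  rw [UniversallySolvable, Matrix.isUnit_iff_isUnit_det,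
    det_nbhdMatrix_eq_zero_of_two_dominating huv hu hv]
  exact not_isUnit_zero
end

section
/- Let Γ be a finite simple graph with n vertices and e edges, and let N = n(n−1)/2. If e > N − ⌊n/2⌋, then Lights Out is not universally solvable on Γ (i.e., the neighborhood matrix of Γ over 𝔽₂ is not invertible). -/
/-!
The complement `Gᶜ` has fewer than `⌊n/2⌋` edges, so they touch at most `n - 2` vertices.
The two or more vertices left untouched are adjacent in `G` to every other vertex, so their
rows in the neighborhood matrix are both all-ones and its determinant vanishes.
-/

namespace SimpleGraph

variable {V : Type*} [Fintype V] (G : SimpleGraph V)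

theorem ncard_edgeSet_add_ncard_edgeSet_compl :
    G.edgeSet.ncard + Gᶜ.edgeSet.ncard = (Fintype.card V).choose 2 := by
  classical
  rw [← Set.ncard_union_eq (G.disjoint_edgeSet.2 disjoint_compl_right), ← edgeSet_sup,
    sup_compl_eq_top, ← card_edgeFinset_top_eq_card_choose_two, ← coe_edgeFinset,
    Set.ncard_coe_finset]

theorem ncard_support_le_two_mul_ncard_edgeSet : G.support.ncard ≤ 2 * G.edgeSet.ncard := by
  classical
  rw [Set.ncard_eq_toFinset_card', ← coe_edgeFinset, Set.ncard_coe_finset,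
    ← sum_degrees_support_eq_twice_card_edges, Finset.card_eq_sum_ones]
  exact Finset.sum_le_sum fun v hv => (G.degree_pos_iff_mem_support v).2 (Set.mem_toFinset.1 hv)

end SimpleGraph

section LightsOut

open SimpleGraph

variable {V : Type} [Fintype V] [DecidableEq V] {G : SimpleGraph V}

theorem nbhdMatrix_row_eq_one_of_notMem_support_compl {v : V} (hv : v ∉ Gᶜ.support) :
    nbhdMatrix G v = 1 := by
  ext w
  rw [nbhdMatrix, Matrix.of_apply, if_pos, Pi.one_apply]
  by_contra! h
  exact hv ⟨w, (G.compl_adj v w).2 h⟩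

theorem not_universallySolvable_of_ne_of_notMem_support_compl {u v : V} (huv : u ≠ v)
    (hu : u ∉ Gᶜ.support) (hv : v ∉ Gᶜ.support) : ¬ UniversallySolvable G := by
  rw [UniversallySolvable, Matrix.isUnit_iff_isUnit_det,
    Matrix.det_zero_of_row_eq huv ((nbhdMatrix_row_eq_one_of_notMem_support_compl hu).trans
      (nbhdMatrix_row_eq_one_of_notMem_support_compl hv).symm)]
  exact not_isUnit_zero

theorem not_universallySolvable_of_ncard_edgeSet_compl_lt
    (h : Gᶜ.edgeSet.ncard < Fintype.card V / 2) : ¬ UniversallySolvable G := by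
  have hsupport : Gᶜ.support.ncard + 2 ≤ Fintype.card V := by
    have := Gᶜ.ncard_support_le_two_mul_ncard_edgeSet
    omega
  have htwo : 1 < Gᶜ.supportᶜ.ncard := by
    rw [Set.ncard_compl, Nat.card_eq_fintype_card]
    omega
  obtain ⟨u, v, hu, hv, huv⟩ := (Set.one_lt_ncard_iff).1 htwo
  exact not_universallySolvable_of_ne_of_notMem_support_compl huv hu hv

end LightsOut

/-- If a finite simple graph `Γ` with `n` vertices has more than `N - ⌊n/2⌋` edges,
where `N = n(n-1)/2`, then Lights Out is not universally solvable on `Γ`. -/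
theorem not_universallySolvable_of_many_edges {V : Type} [Fintype V] [DecidableEq V]
    (G : SimpleGraph V) (n e : ℕ) (hn : Fintype.card V = n) (he : G.edgeSet.ncard = e)
    (h : n * (n - 1) / 2 - n / 2 < e) :
    ¬ UniversallySolvable G := by
  have hsum := G.ncard_edgeSet_add_ncard_edgeSet_compl
  rw [hn, he, Nat.choose_two_right] at hsum
  refine not_universallySolvable_of_ncard_edgeSet_compl_lt ?_
  omega
end

section
/- Let Γ be a finite simple graph and let Γ' be the graph with exactly two vertices u and v and no edges, with vertex set disjoint from that of Γ. Then Lights Out is universally solvable on the graph join Γ + Γ' if and only if Lights Out is universally solvable on Γ. -/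
/-- The graph join of two graphs on disjoint vertex sets: it contains all edges of both
graphs together with an edge between every vertex of the first and every vertex of the
second. -/
def graphJoin {V W : Type} (G : SimpleGraph V) (H : SimpleGraph W) : SimpleGraph (V ⊕ W) where
  Adj := fun
    | .inl a, .inl b => G.Adj a b
    | .inr a, .inr b => H.Adj a b
    | .inl _, .inr _ => True
    | .inr _, .inl _ => True
  symm := ⟨by
    rintro (a | a) (b | b) h
    · exact G.adj_symm h
    · trivial
    · trivial
    · exact H.adj_symm h⟩
  loopless := ⟨by
    rintro (a | a) h
    · exact G.loopless.irrefl a h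
    · exact H.loopless.irrefl a h⟩

/-- Let `Γ'` be the graph with two vertices and no edges. Lights Out is universally
solvable on the graph join `Γ + Γ'` if and only if it is universally solvable on `Γ`. -/
theorem universallySolvable_join_two_isolated_vertices_iff {V : Type} [Fintype V]
    [DecidableEq V] (G : SimpleGraph V) :
    UniversallySolvable (graphJoin G (⊥ : SimpleGraph (Fin 2))) ↔ UniversallySolvable G := by
  classical
  set A := nbhdMatrix G with hA
  set J : Matrix V (Fin 2) (ZMod 2) := Matrix.of fun _ _ => 1 with hJ
  set Jt : Matrix (Fin 2) V (ZMod 2) := Matrix.of fun _ _ => 1 with hJt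
  -- the neighborhood matrix of the join is a block matrix
  have hblock : nbhdMatrix (graphJoin G (⊥ : SimpleGraph (Fin 2)))
      = Matrix.fromBlocks A J Jt 1 := by
    ext i j
    rcases i with i | i <;> rcases j with j | j <;>
      simp [hA, nbhdMatrix, graphJoin, hJ, hJt, Matrix.one_apply]
  -- over ZMod 2, J * Jt = 0 since each entry is 2 = 0
  have hJJt : J * Jt = 0 := by
    ext i j
    simp [hJ, hJt, Matrix.mul_apply]
    decide
  -- LDU factorization
  have hfac : Matrix.fromBlocks A J Jt (1 : Matrix (Fin 2) (Fin 2) (ZMod 2))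
      = Matrix.fromBlocks 1 J 0 1 * Matrix.fromBlocks A 0 0 1 * Matrix.fromBlocks 1 0 Jt 1 := by
    rw [Matrix.fromBlocks_multiply, Matrix.fromBlocks_multiply]
    simp [hJJt]
  rw [UniversallySolvable, UniversallySolvable, hblock,
    Matrix.isUnit_iff_isUnit_det, Matrix.isUnit_iff_isUnit_det, hfac,
    Matrix.det_mul, Matrix.det_mul, Matrix.det_fromBlocks_zero₂₁,
    Matrix.det_fromBlocks_zero₂₁, Matrix.det_fromBlocks_zero₁₂]
  simp
  exact Iff.rfl
end

section
/- Let Γ be a finite simple graph with an even number of vertices. If Γ has an isolated vertex (a vertex of degree 0), then Lights Out is not universally solvable on the complement graph Γ^C. -/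
namespace Matrix

theorem exists_transpose_eq_neg_map_intCast_eq {ι : Type*} [LinearOrder ι]
    {C : Matrix ι ι (ZMod 2)} (hC : C.IsSymm) (hdiag : C.diag = 0) :
    ∃ B : Matrix ι ι ℤ, Bᵀ = -B ∧ B.map (Int.cast : ℤ → ZMod 2) = C := by
  refine ⟨of fun i j => if i < j then ((C i j).val : ℤ) else -((C i j).val : ℤ), ?_, ?_⟩
  · ext i j
    have hji : C j i = C i j := hC.apply i j
    rcases lt_trichotomy i j with h | rfl | h
    · simp [hji, h, h.not_gt]
    · simp [show C i i = 0 from congrFun hdiag i]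
    · simp [hji, h, h.not_gt]
  · ext i j
    simp only [map_apply, of_apply]
    split_ifs <;> simp [ZMod.neg_eq_self_mod_two]

variable {ι : Type*} [Fintype ι] [DecidableEq ι]

theorem det_eq_zero_of_transpose_eq_neg_of_odd {R : Type*} [CommRing R] [IsAddTorsionFree R]
    {B : Matrix ι ι R} (hB : Bᵀ = -B) (hodd : Odd (Fintype.card ι)) : B.det = 0 := by
  refine self_eq_neg.mp ?_
  calc B.det = Bᵀ.det := (det_transpose B).symm
    _ = -B.det := by rw [hB, det_neg, hodd.neg_one_pow, neg_one_mul]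

theorem det_eq_zero_of_isSymm_of_diag_eq_zero_of_odd {C : Matrix ι ι (ZMod 2)}
    (hC : C.IsSymm) (hdiag : C.diag = 0) (hodd : Odd (Fintype.card ι)) : C.det = 0 := by
  let _ : LinearOrder ι := LinearOrder.lift' _ (Fintype.equivFin ι).injective
  obtain ⟨B, hB, rfl⟩ := exists_transpose_eq_neg_map_intCast_eq hC hdiag
  simpa [det_eq_zero_of_transpose_eq_neg_of_odd hB hodd] using
    ((Int.castRingHom (ZMod 2)).map_det B).symm

theorem det_of_const_add_eq_zero_of_det_submatrix_eq_zero {K : Type*} [CommRing K] [IsDomain K]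
    (A : Matrix ι ι K) (c : K) (v : ι) (hrow : ∀ j, A v j = 0) (hcol : ∀ i, A i v = 0)
    (hsub : (A.submatrix ((↑) : {i // i ≠ v} → ι) (↑)).det = 0) :
    (of (fun _ _ => c) + A).det = 0 := by
  obtain ⟨x, hx0, hx⟩ := exists_mulVec_eq_zero_iff.2 hsub
  let y : ι → K := fun i => if h : i = v then -∑ j, x j else x ⟨i, h⟩
  have hy : ∀ j : {i // i ≠ v}, y j = x j := fun j => dif_neg j.2
  have hsum : ∑ i, y i = 0 := by
    rw [Fintype.sum_eq_add_sum_subtype_ne _ v]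
    simp [y, hy]
  have hAy : A *ᵥ y = 0 := by
    funext i
    rw [mulVec, dotProduct, Fintype.sum_eq_add_sum_subtype_ne _ v, hcol, zero_mul, zero_add]
    by_cases hi : i = v
    · simp [hi, hrow]
    · simpa [hy, mulVec, dotProduct] using congrFun hx ⟨i, hi⟩
  refine exists_mulVec_eq_zero_iff.1 ⟨y, fun h => hx0 (funext fun j => ?_), ?_⟩
  · simpa [hy] using congrFun h j
  · rw [add_mulVec, hAy, add_zero]
    funext i
    simp [mulVec, dotProduct, ← Finset.mul_sum, hsum]

end Matrix

theorem nbhdMatrix_compl_eq_of_add_adjMatrix {V : Type} [Fintype V] [DecidableEq V]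
    (G : SimpleGraph V) [DecidableRel G.Adj] :
    nbhdMatrix Gᶜ = Matrix.of (fun _ _ => 1) + G.adjMatrix (ZMod 2) := by
  ext i j
  by_cases hij : i = j
  · simp [nbhdMatrix, hij]
  · by_cases h : G.Adj i j
    · simp [nbhdMatrix, hij, h]
      decide
    · simp [nbhdMatrix, hij, h]

/-- If a finite simple graph `Γ` with an even number of vertices has an isolated vertex,
then Lights Out is not universally solvable on the complement graph `Γᶜ`. -/
theorem not_universallySolvable_compl_of_isolated_of_even {V : Type} [Fintype V]
    [DecidableEq V] (G : SimpleGraph V) (heven : Even (Fintype.card V))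
    (v : V) (hv : ∀ w : V, ¬ G.Adj v w) :
    ¬ UniversallySolvable Gᶜ := by
  classical
  have hodd : Odd (Fintype.card {w // w ≠ v}) := by
    have : 1 ≤ Fintype.card V := Fintype.card_pos_iff.2 ⟨v⟩
    rw [Fintype.card_subtype_compl, Fintype.card_subtype_eq]
    exact Nat.Even.sub_odd this heven odd_one
  have hsub : ((G.adjMatrix (ZMod 2)).submatrix ((↑) : {w // w ≠ v} → V) (↑)).det = 0 :=
    Matrix.det_eq_zero_of_isSymm_of_diag_eq_zero_of_odd
      ((G.isSymm_adjMatrix).submatrix _) (funext fun _ => by simp) hodd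
  have hdet : (nbhdMatrix Gᶜ).det = 0 := by
    rw [nbhdMatrix_compl_eq_of_add_adjMatrix]
    exact Matrix.det_of_const_add_eq_zero_of_det_submatrix_eq_zero _ 1 v
      (fun w => by simp [hv w]) (fun w => by simp [G.adj_comm, hv]) hsub
  rw [UniversallySolvable, Matrix.isUnit_iff_isUnit_det, hdet]
  exact not_isUnit_zero
end

section
/- Let Γ be a finite simple graph with an odd number of vertices and let v be an isolated vertex of Γ (a vertex of degree 0). Then Lights Out is universally solvable on the complement graph Γ^C if and only if Lights Out is universally solvable on (Γ \ {v})^C, where Γ \ {v} is the graph obtained from Γ by deleting the vertex v. -/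
open Finset Matrix

private lemma zmod2_cases (a : ZMod 2) : a = 0 ∨ a = 1 := by revert a; decide

private lemma zmod2_add_self (a : ZMod 2) : a + a = 0 := by revert a; decide

private lemma zmod2_mul_self (a : ZMod 2) : a * a = a := by revert a; decide

private lemma zmod2_ne_zero {a : ZMod 2} (h : a ≠ 0) : a = 1 := by
  rcases zmod2_cases a with h0 | h1
  · exact absurd h0 h
  · exact h1

/-- An involution on an odd-cardinality fintype has a fixed point. -/
private lemma exists_fixed_of_involution {W : Type*} [Fintype W] [DecidableEq W]
    (hW : Odd (Fintype.card W)) (σ : Equiv.Perm W) (hσ : ∀ i, σ (σ i) = i) :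
    ∃ i, σ i = i := by
  by_contra h
  push_neg at h
  have hsum : ∑ _i : W, (1 : ZMod 2) = 0 := by
    apply Finset.sum_involution (g := fun i _ => σ i)
    · intro a _; exact zmod2_add_self 1
    · intro a _ _; exact h a
    · intro a _; exact Finset.mem_univ _
    · intro a _; exact hσ a
  rw [Finset.sum_const, Finset.card_univ, nsmul_eq_mul, mul_one] at hsum
  have : (2 : ℕ) ∣ Fintype.card W := by
    rwa [ZMod.natCast_eq_zero_iff] at hsum
  exact (Nat.not_even_iff_odd.mpr hW) (even_iff_two_dvd.mpr this)

/-- A symmetric matrix over `ZMod 2` with zero diagonal and odd size has determinant 0. -/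
private lemma det_eq_zero_of_symm_zero_diag {W : Type*} [Fintype W] [DecidableEq W]
    (hW : Odd (Fintype.card W)) (A : Matrix W W (ZMod 2))
    (hsymm : ∀ i j, A i j = A j i) (hdiag : ∀ i, A i i = 0) :
    A.det = 0 := by
  rw [Matrix.det_apply]
  have hsmul : ∀ (u : ℤˣ) (x : ZMod 2), u • x = x := by
    intro u x
    rcases Int.units_eq_one_or u with rfl | rfl
    · simp
    · simp only [Units.smul_def, Units.val_neg, Units.val_one, zsmul_eq_mul,
        Int.cast_neg, Int.cast_one, neg_mul, one_mul]
      exact CharTwo.neg_eq x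
  calc ∑ σ : Equiv.Perm W, Equiv.Perm.sign σ • ∏ i, A (σ i) i
      = ∑ σ : Equiv.Perm W, ∏ i, A (σ i) i := by
        exact Finset.sum_congr rfl fun σ _ => hsmul _ _
    _ = 0 := by
        apply Finset.sum_involution (g := fun σ _ => σ⁻¹)
        · intro σ _
          have : ∏ i, A (σ⁻¹ i) i = ∏ i, A (σ i) i := by
            calc ∏ i, A (σ⁻¹ i) i = ∏ i, A (σ⁻¹ (σ i)) (σ i) :=
                  (Equiv.prod_comp σ (fun i => A (σ⁻¹ i) i)).symm
              _ = ∏ i, A i (σ i) := by simp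
              _ = ∏ i, A (σ i) i := by exact Finset.prod_congr rfl fun i _ => hsymm _ _
          rw [this]; exact zmod2_add_self _
        · intro σ _ hne
          intro heq
          have hinv : ∀ i, σ (σ i) = i := by
            intro i
            have h2 : σ⁻¹ (σ i) = σ (σ i) := by rw [heq]
            simpa using h2.symm
          obtain ⟨i, hi⟩ := exists_fixed_of_involution hW σ hinv
          exact hne (Finset.prod_eq_zero (Finset.mem_univ i) (by rw [hi, hdiag]))
        · intro σ _; simp
        · intro σ _; exact Finset.mem_univ _

/-- Over `ZMod 2`, a double sum of a symmetric function equals the diagonal sum. -/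
private lemma sum_symm_eq_diag {W : Type*} [Fintype W] [DecidableEq W]
    (f : W → W → ZMod 2) (hf : ∀ i j, f i j = f j i) :
    (∑ i, ∑ j, f i j) = ∑ i, f i i := by
  rw [← Finset.sum_product']
  rw [← Finset.sum_filter_add_sum_filter_not (Finset.univ ×ˢ Finset.univ)
    (fun p => p.1 = p.2) (fun p => f p.1 p.2)]
  have h2 : ∑ p ∈ (Finset.univ ×ˢ Finset.univ).filter (fun p : W × W => ¬ p.1 = p.2),
      f p.1 p.2 = 0 := by
    apply Finset.sum_involution (g := fun p _ => (p.2, p.1))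
      (g_mem := fun p hp => by
        simp only [Finset.mem_filter, Finset.mem_product] at hp ⊢
        exact ⟨⟨Finset.mem_univ _, Finset.mem_univ _⟩, fun h => hp.2 h.symm⟩)
    · intro p _
      rw [hf p.2 p.1]; exact zmod2_add_self _
    · intro p hp _
      simp only [Finset.mem_filter] at hp
      intro hcon
      exact hp.2 (congrArg Prod.snd hcon)
    · intro p _; rfl
  have h1 : ∑ p ∈ (Finset.univ ×ˢ Finset.univ).filter (fun p : W × W => p.1 = p.2),
      f p.1 p.2 = ∑ i, f i i := by
    apply Finset.sum_nbij' (i := fun p => p.1) (j := fun i => (i, i))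
      (hi := fun p _ => Finset.mem_univ _)
      (hj := fun i _ => by simp)
      (left_neg := fun p hp => by
        simp only [Finset.mem_filter] at hp
        exact Prod.ext rfl hp.2)
      (right_neg := fun i _ => rfl)
    intro p hp
    simp only [Finset.mem_filter] at hp
    rw [hp.2]
  rw [h1, h2, add_zero]

/-- Quadratic form identity over `ZMod 2` for symmetric matrices. -/
private lemma dot_mulVec_self {W : Type*} [Fintype W] [DecidableEq W]
    (A : Matrix W W (ZMod 2)) (hsymm : ∀ i j, A i j = A j i) (x : W → ZMod 2) :
    x ⬝ᵥ (A *ᵥ x) = ∑ i, x i * A i i := by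
  have h : x ⬝ᵥ (A *ᵥ x) = ∑ i, ∑ j, x i * A i j * x j := by
    simp [dotProduct, Matrix.mulVec, Finset.mul_sum, mul_assoc]
  rw [h, sum_symm_eq_diag (f := fun i j => x i * A i j * x j)
    (by intro i j; show x i * A i j * x j = x j * A j i * x i; rw [hsymm]; ring)]
  apply Finset.sum_congr rfl
  intro i _
  calc x i * A i i * x i = x i * x i * A i i := by ring
    _ = x i * A i i := by rw [zmod2_mul_self]

private lemma sum_split {W : Type*} [Fintype W] [DecidableEq W] (i0 : W)
    (f : W → ZMod 2) :
    ∑ w, f w = f i0 + ∑ t : {w : W // w ≠ i0}, f ↑t := by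
  rw [← Finset.sum_subtype (Finset.univ.erase i0)
    (by intro x; simp [Finset.mem_erase]) f]
  rw [Finset.add_sum_erase _ f (Finset.mem_univ i0)]

private lemma mulVec_ones {W : Type*} [Fintype W] [DecidableEq W] (y : W → ZMod 2) (w : W) :
    (Matrix.of (fun _ _ : W => (1 : ZMod 2)) *ᵥ y) w = ∑ u, y u := by
  simp [Matrix.mulVec, dotProduct]

private lemma crux {W : Type*} [Fintype W] [DecidableEq W]
    (hW : Even (Fintype.card W)) (N : Matrix W W (ZMod 2))
    (hsymm : ∀ i j, N i j = N j i) (hdiag : ∀ i, N i i = 1)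
    (x : W → ZMod 2) (hx : N *ᵥ x = fun _ => 1) (hsum : ∑ i, x i = 1) :
    ∃ z, z ≠ 0 ∧ N *ᵥ z = 0 := by
  by_contra hcon
  push_neg at hcon
  have hinj : ∀ a b : W → ZMod 2, N *ᵥ a = N *ᵥ b → a = b := by
    intro a b hab
    by_contra hne
    exact hcon (a - b) (sub_ne_zero_of_ne hne)
      (by rw [Matrix.mulVec_sub, hab, sub_self])
  have hxne : ∃ i0, x i0 = 1 := by
    by_contra hx0
    push_neg at hx0
    have : ∀ i, x i = 0 := by
      intro i
      rcases zmod2_cases (x i) with h | h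
      · exact h
      · exact absurd h (hx0 i)
    rw [Finset.sum_congr rfl (fun i _ => this i), Finset.sum_const, smul_zero] at hsum
    exact zero_ne_one hsum
  obtain ⟨i0, hi0⟩ := hxne
  set A : Matrix W W (ZMod 2) := N + Matrix.of (fun _ _ => 1) with hA
  have hAapp : ∀ i j, A i j = N i j + 1 := fun i j => rfl
  have hAsymm : ∀ i j, A i j = A j i := by
    intro i j; rw [hAapp, hAapp, hsymm]
  have hAdiag : ∀ i, A i i = 0 := by
    intro i; rw [hAapp, hdiag]; exact zmod2_add_self 1
  have hAT : Aᵀ = A := by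
    ext i j; exact hAsymm j i
  have hAx : A *ᵥ x = 0 := by
    funext w
    rw [hA, Matrix.add_mulVec, Pi.add_apply, mulVec_ones, hx, hsum]
    exact zmod2_add_self 1
  -- the subtype with i0 removed
  have hcardT : Odd (Fintype.card {w : W // w ≠ i0}) := by
    have h1 : Fintype.card {w : W // w ≠ i0} = Fintype.card W - 1 := by
      simpa using Fintype.card_subtype_compl (fun w : W => w = i0)
    have h2 : 1 ≤ Fintype.card W := Fintype.card_pos_iff.mpr ⟨i0⟩
    obtain ⟨k, hk⟩ := hW
    exact ⟨k - 1, by omega⟩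
  set A' : Matrix {w : W // w ≠ i0} {w : W // w ≠ i0} (ZMod 2) :=
    A.submatrix Subtype.val Subtype.val with hA'
  have hdet : A'.det = 0 :=
    det_eq_zero_of_symm_zero_diag hcardT A' (fun i j => hAsymm ↑i ↑j)
      (fun i => hAdiag ↑i)
  obtain ⟨z, hz0, hz⟩ := Matrix.exists_mulVec_eq_zero_iff.mpr hdet
  set zh : W → ZMod 2 := fun w => if h : w = i0 then 0 else z ⟨w, h⟩ with hzh
  have hzh0 : zh i0 = 0 := by simp [hzh]
  have hzht : ∀ t : {w : W // w ≠ i0}, zh ↑t = z t := by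
    intro t; simp [hzh, t.prop]
  have hAzh_ne : ∀ w (h : w ≠ i0), (A *ᵥ zh) w = 0 := by
    intro w h
    have : (A *ᵥ zh) w = (A' *ᵥ z) ⟨w, h⟩ := by
      show ∑ u, A w u * zh u = ∑ t : {w : W // w ≠ i0}, A' ⟨w, h⟩ t * z t
      rw [sum_split i0 (fun u => A w u * zh u), hzh0, mul_zero, zero_add]
      exact Finset.sum_congr rfl fun t _ => by rw [hzht]; rfl
    rw [this, hz]
    rfl
  have hAzh : A *ᵥ zh = 0 := by
    have hdot : x ⬝ᵥ (A *ᵥ zh) = 0 := by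
      rw [Matrix.dotProduct_mulVec, ← hAT, Matrix.vecMul_transpose, hAx]
      exact zero_dotProduct _
    have hdot2 : x ⬝ᵥ (A *ᵥ zh) = (A *ᵥ zh) i0 := by
      show ∑ w, x w * (A *ᵥ zh) w = _
      rw [sum_split i0 (fun w => x w * (A *ᵥ zh) w), hi0, one_mul]
      have : ∀ t : {w : W // w ≠ i0}, x ↑t * (A *ᵥ zh) ↑t = 0 := by
        intro t; rw [hAzh_ne ↑t t.prop, mul_zero]
      rw [Finset.sum_congr rfl (fun t _ => this t), Finset.sum_const, smul_zero, add_zero]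
    funext w
    by_cases h : w = i0
    · subst h
      rw [Pi.zero_apply, ← hdot2, hdot]
    · rw [Pi.zero_apply, hAzh_ne w h]
  -- conclude
  set c : ZMod 2 := ∑ w, zh w with hc
  have hNzh : N *ᵥ zh = N *ᵥ (c • x) := by
    have h1 : N *ᵥ zh + Matrix.of (fun _ _ : W => (1 : ZMod 2)) *ᵥ zh = 0 := by
      rw [← Matrix.add_mulVec, ← hA, hAzh]
    have h2 : N *ᵥ zh = fun _ => c := by
      funext w
      have := congrFun h1 w
      rw [Pi.add_apply, mulVec_ones, Pi.zero_apply, ← hc] at this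
      have h3 := congrArg (· + c) this
      simpa [add_assoc, zmod2_add_self] using h3
    rw [h2, Matrix.mulVec_smul, hx]
    funext w
    simp
  have heq := hinj _ _ hNzh
  rcases zmod2_cases c with h | h
  · rw [h, zero_smul] at heq
    apply hz0
    funext t
    rw [← hzht t, heq]
    simp
  · rw [h, one_smul] at heq
    have := congrFun heq i0
    rw [hzh0, hi0] at this
    exact zero_ne_one this

private lemma sum_split2 {W : Type*} [Fintype W] [DecidableEq W] (i0 : W)
    (S : Set W) [Fintype ↥S] (hS : ∀ w, w ∈ S ↔ w ≠ i0) (f : W → ZMod 2) :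
    ∑ w, f w = f i0 + ∑ t : ↥S, f ↑t := by
  rw [← Finset.sum_subtype (Finset.univ.erase i0)
    (by intro x; simp [Finset.mem_erase, hS]) f]
  rw [Finset.add_sum_erase _ f (Finset.mem_univ i0)]

open scoped Classical in
private lemma nbhd_apply {V : Type} [Fintype V] [DecidableEq V] (G : SimpleGraph V)
    (i j : V) : nbhdMatrix G i j = if i = j ∨ G.Adj i j then 1 else 0 := rfl

/-- If a finite simple graph `Γ` has an odd number of vertices and `v` is an isolated
vertex of `Γ`, then Lights Out is universally solvable on `Γᶜ` if and only if it is
universally solvable on `(Γ \ {v})ᶜ`, the complement of the graph obtained by deleting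
the vertex `v`. -/
theorem universallySolvable_compl_iff_of_isolated_of_odd {V : Type} [Fintype V]
    [DecidableEq V] (G : SimpleGraph V) (hodd : Odd (Fintype.card V))
    (v : V) (hv : ∀ w : V, ¬ G.Adj v w) :
    UniversallySolvable Gᶜ ↔
      UniversallySolvable (G.induce {w : V | w ≠ v})ᶜ := by
  classical
  haveI : Fact (Nat.Prime 2) := ⟨Nat.prime_two⟩
  unfold UniversallySolvable
  rw [Matrix.isUnit_iff_isUnit_det, Matrix.isUnit_iff_isUnit_det,
    isUnit_iff_ne_zero, isUnit_iff_ne_zero, ne_eq, ne_eq,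
    ← Matrix.exists_mulVec_eq_zero_iff, ← Matrix.exists_mulVec_eq_zero_iff]
  apply not_congr
  set S : Set V := {w : V | w ≠ v} with hSdef
  set M : Matrix V V (ZMod 2) := nbhdMatrix Gᶜ with hMdef
  set N : Matrix ↥S ↥S (ZMod 2) := nbhdMatrix (G.induce S)ᶜ with hNdef
  have hS : ∀ w : V, w ∈ S ↔ w ≠ v := fun w => Iff.rfl
  have hMval : ∀ i j, M i j = if i = j ∨ ¬ G.Adj i j then 1 else 0 := by
    intro i j
    rw [hMdef, nbhd_apply]
    by_cases h1 : i = j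
    · simp [h1]
    · by_cases h2 : G.Adj i j
      · simp [h1, h2]
      · simp [h1, h2]
  have hNval : ∀ i j : ↥S, N i j = if (i : V) = (j : V) ∨ ¬ G.Adj ↑i ↑j then 1 else 0 := by
    intro i j
    rw [hNdef, nbhd_apply]
    by_cases h1 : (i : V) = (j : V)
    · simp [h1, Subtype.ext_iff]
    · by_cases h2 : G.Adj ↑i ↑j
      · simp [h1, h2, Subtype.ext_iff]
      · simp [h1, h2, Subtype.ext_iff]
  have hNM : ∀ i j : ↥S, N i j = M ↑i ↑j := by
    intro i j; rw [hNval, hMval]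
  have hMsymm : ∀ i j, M i j = M j i := by
    intro i j
    rw [hMval, hMval]
    have h : (i = j ∨ ¬ G.Adj i j) ↔ (j = i ∨ ¬ G.Adj j i) := by
      constructor
      · rintro (rfl | h)
        · exact Or.inl rfl
        · exact Or.inr (fun ha => h (G.adj_symm ha))
      · rintro (rfl | h)
        · exact Or.inl rfl
        · exact Or.inr (fun ha => h (G.adj_symm ha))
    simp [h]
  have hMdiag : ∀ i, M i i = 1 := by intro i; simp [hMval]
  have hMv : ∀ w, M v w = 1 := by intro w; simp [hMval, hv w]
  have hMvc : ∀ w, M w v = 1 := by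
    intro w
    have h : ¬ G.Adj w v := fun h => hv w (G.adj_symm h)
    simp [hMval, h]
  have hNsymm : ∀ i j : ↥S, N i j = N j i := by
    intro i j; rw [hNM, hNM]; exact hMsymm _ _
  have hNdiag : ∀ i : ↥S, N i i = 1 := by intro i; rw [hNM]; exact hMdiag _
  have hcardS : Fintype.card ↥S = Fintype.card V - 1 := by
    have e : ↥S ≃ {w : V // ¬ (w = v)} := Equiv.subtypeEquivRight (fun w => Iff.rfl)
    rw [Fintype.card_congr e, Fintype.card_subtype_compl, Fintype.card_subtype_eq]
  have hcardV : 1 ≤ Fintype.card V := Fintype.card_pos_iff.mpr ⟨v⟩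
  have hSeven : Even (Fintype.card ↥S) := by
    obtain ⟨k, hk⟩ := hodd
    exact ⟨k, by omega⟩
  have hMsplit : ∀ (y : V → ZMod 2) (w : V),
      (M *ᵥ y) w = M w v * y v + ∑ t : ↥S, M w ↑t * y ↑t := by
    intro y w
    show ∑ u, M w u * y u = _
    exact sum_split2 v S hS (fun u => M w u * y u)
  constructor
  · rintro ⟨y, hy0, hMy⟩
    have hsumy : ∑ w, y w = 0 := by
      have h := congrFun hMy v
      rw [hMsplit, Pi.zero_apply] at h
      rw [sum_split2 v S hS y]
      calc y v + ∑ t : ↥S, y ↑t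
          = M v v * y v + ∑ t : ↥S, M v ↑t * y ↑t := by
            rw [hMv v, one_mul]
            congr 1
            exact Finset.sum_congr rfl fun t _ => by rw [hMv ↑t, one_mul]
        _ = 0 := h
    set c : ZMod 2 := y v with hc
    set x : ↥S → ZMod 2 := fun t => y ↑t with hx
    have hNx : N *ᵥ x = fun _ => c := by
      funext t
      have h := congrFun hMy ↑t
      rw [hMsplit, Pi.zero_apply, hMvc] at h
      have h2 : (N *ᵥ x) t = ∑ s : ↥S, M ↑t ↑s * y ↑s := by
        show ∑ s : ↥S, N t s * x s = _
        exact Finset.sum_congr rfl fun s _ => by rw [hNM, hx]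
      rw [h2]
      have h3 := congrArg (· + c) h
      simp only [one_mul, zero_add, ← hc] at h3
      rw [add_comm (y v)] at h3
      rw [add_assoc] at h3
      rw [zmod2_add_self, add_zero] at h3
      exact h3
    have hsumx : ∑ t : ↥S, x t = c := by
      have h := sum_split2 v S hS y
      rw [hsumy] at h
      have h3 := congrArg (· + (∑ t : ↥S, y ↑t)) h.symm
      simp only [add_assoc, zmod2_add_self, add_zero, zero_add] at h3
      rw [← h3, ← hc]
    rcases zmod2_cases c with hc0 | hc1
    · refine ⟨x, ?_, ?_⟩
      · intro hx0
        apply hy0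
        funext w
        by_cases h : w = v
        · rw [h, Pi.zero_apply, ← hc, hc0]
        · have : x ⟨w, h⟩ = 0 := by rw [hx0]; rfl
          rw [Pi.zero_apply, ← this]
      · rw [hNx]
        funext t
        rw [hc0]
        rfl
    · rw [hc1] at hNx hsumx
      exact crux hSeven N hNsymm hNdiag x hNx hsumx
  · rintro ⟨x, hx0, hNx⟩
    have hsumx : ∑ t : ↥S, x t = 0 := by
      have h := dot_mulVec_self N hNsymm x
      rw [hNx, dotProduct_zero] at h
      rw [← h.symm]
      exact Finset.sum_congr rfl fun t _ => by rw [hNdiag, mul_one]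
    refine ⟨fun w => if h : w = v then 0 else x ⟨w, h⟩, ?_, ?_⟩
    · intro h0
      apply hx0
      funext t
      have := congrFun h0 ↑t
      simp only [Pi.zero_apply] at this ⊢
      rw [dif_neg t.prop] at this
      rw [← this]
    · funext w
      set y : V → ZMod 2 := fun w => if h : w = v then 0 else x ⟨w, h⟩ with hy
      have hyv : y v = 0 := by simp [hy]
      have hyt : ∀ t : ↥S, y ↑t = x t := by
        intro t; simp only [hy]; rw [dif_neg t.prop]
      rw [Pi.zero_apply, hMsplit, hyv, mul_zero, zero_add]
      by_cases h : w = v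
      · calc ∑ t : ↥S, M w ↑t * y ↑t = ∑ t : ↥S, x t := by
              exact Finset.sum_congr rfl fun t _ => by rw [h, hMv, one_mul, hyt]
          _ = 0 := hsumx
      · have hw : w ∈ S := (hS w).mpr h
        calc ∑ t : ↥S, M w ↑t * y ↑t = ∑ t : ↥S, N ⟨w, hw⟩ t * x t := by
              exact Finset.sum_congr rfl fun t _ => by rw [hNM, hyt]
          _ = (N *ᵥ x) ⟨w, hw⟩ := rfl
          _ = 0 := by rw [hNx]; rfl
end

section
/- Let Γ be a finite simple graph and let v be a vertex of Γ that is adjacent to two or more vertices of degree 1. Then Lights Out is not universally solvable on the complement graph Γ^C. -/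
theorem SimpleGraph.eq_or_compl_adj_iff {V : Type} (G : SimpleGraph V) (a j : V) :
    a = j ∨ Gᶜ.Adj a j ↔ ¬ G.Adj a j := by
  rw [SimpleGraph.compl_adj]
  by_cases h : a = j <;> simp [h]

section

variable {V : Type} [Fintype V] [DecidableEq V]

theorem not_universallySolvable_of_closed_neighbors_eq (H : SimpleGraph V) {a b : V}
    (hab : a ≠ b) (h : ∀ j, a = j ∨ H.Adj a j ↔ b = j ∨ H.Adj b j) :
    ¬ UniversallySolvable H := by
  have hrow : nbhdMatrix H a = nbhdMatrix H b := by
    funext j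
    simp only [nbhdMatrix, Matrix.of_apply]
    have := h j
    split_ifs <;> tauto
  rw [UniversallySolvable, Matrix.isUnit_iff_isUnit_det, Matrix.det_zero_of_row_eq hab hrow]
  exact not_isUnit_zero

theorem not_universallySolvable_compl_of_neighborSet_eq (G : SimpleGraph V) {a b : V}
    (hab : a ≠ b) (h : G.neighborSet a = G.neighborSet b) :
    ¬ UniversallySolvable Gᶜ :=
  not_universallySolvable_of_closed_neighbors_eq Gᶜ hab fun j => by
    rw [G.eq_or_compl_adj_iff, G.eq_or_compl_adj_iff, ← G.mem_neighborSet, h, G.mem_neighborSet]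

end

theorem SimpleGraph.neighborSet_eq_singleton_of_degree_eq_one {V : Type} (G : SimpleGraph V)
    {a v : V} [Fintype (G.neighborSet a)] (hva : G.Adj v a) (ha : G.degree a = 1) :
    G.neighborSet a = {v} := by
  obtain ⟨w, -, hw⟩ := SimpleGraph.degree_eq_one_iff_existsUnique_adj.mp ha
  ext j
  simp only [SimpleGraph.mem_neighborSet, Set.mem_singleton_iff]
  exact ⟨fun hj => (hw j hj).trans (hw v hva.symm).symm, fun hj => hj ▸ hva.symm⟩

/-- If a vertex `v` of a finite simple graph `Γ` is adjacent to two or more vertices of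
degree 1, then Lights Out is not universally solvable on the complement graph `Γᶜ`. -/
theorem not_universallySolvable_compl_of_two_pendant_neighbors {V : Type} [Fintype V]
    [DecidableEq V] (G : SimpleGraph V) [DecidableRel G.Adj] (v a b : V) (hab : a ≠ b)
    (hva : G.Adj v a) (hvb : G.Adj v b) (ha : G.degree a = 1) (hb : G.degree b = 1) :
    ¬ UniversallySolvable Gᶜ :=
  not_universallySolvable_compl_of_neighborSet_eq G hab <| by
    rw [G.neighborSet_eq_singleton_of_degree_eq_one hva ha,
      G.neighborSet_eq_singleton_of_degree_eq_one hvb hb]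
end

section
/- Let Γ be a finite simple graph with distinct vertices u and v such that the edge between u and v is an isolated edge of Γ (i.e., u and v are adjacent and both have degree 1). Then Lights Out is universally solvable on the complement graph Γ^C if and only if Lights Out is universally solvable on (Γ \ {u, v})^C, where Γ \ {u, v} is the graph obtained from Γ by deleting the vertices u and v. -/
namespace Matrix

variable {m R : Type*} [Fintype m] [CommRing R]

theorem det_eq_det_toBlock_of_toBlock_compl_eq_one [DecidableEq m] (M : Matrix m m R)
    (p : m → Prop) [DecidablePred p] (hone : M.toBlock (fun i => ¬p i) (fun i => ¬p i) = 1)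
    (hzero : M.toBlock p (fun i => ¬p i) * M.toBlock (fun i => ¬p i) p = 0) :
    M.det = (M.toBlock p p).det := by
  rw [det_toBlock M p, hone, det_fromBlocks_one₂₂, hzero, sub_zero]

theorem of_const_one_mul_of_const_one {l n : Type*} [Fintype n] :
    (of fun (_ : l) (_ : m) => (1 : R)) * (of fun (_ : m) (_ : n) => (1 : R)) =
      of fun _ _ => (Fintype.card m : R) := by
  ext i j
  simp [mul_apply]

end Matrix

theorem SimpleGraph.induce_compl {V : Type*} (G : SimpleGraph V) (s : Set V) :
    (G.induce s)ᶜ = Gᶜ.induce s := by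
  ext x y
  simp [Subtype.ext_iff]

theorem SimpleGraph.compl_adj_of_degree_eq_one {V : Type*} {G : SimpleGraph V} {u v w : V}
    [Fintype (G.neighborSet u)] (hu : G.degree u = 1) (huv : G.Adj u v) (hwu : w ≠ u)
    (hwv : w ≠ v) : Gᶜ.Adj w u :=
  ⟨hwu, fun h => hwv ((degree_eq_one_iff_existsUnique_adj.mp hu).unique h.symm huv)⟩

section nbhdMatrix

variable {V : Type} [Fintype V] [DecidableEq V] (H : SimpleGraph V)

open scoped Classical in
theorem nbhdMatrix_apply (i j : V) :
    nbhdMatrix H i j = if i = j ∨ H.Adj i j then 1 else 0 :=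
  rfl

theorem nbhdMatrix_toBlock_eq_nbhdMatrix_induce (s : Set V) [DecidablePred (· ∈ s)] :
    (nbhdMatrix H).toBlock (· ∈ s) (· ∈ s) = nbhdMatrix (H.induce s) := by
  ext i j
  classical
  exact if_congr (or_congr Subtype.val_inj .rfl) rfl rfl

variable {H}

theorem nbhdMatrix_toBlock_eq_one {p : V → Prop} (h : ∀ i j, p i → p j → ¬H.Adj i j) :
    (nbhdMatrix H).toBlock p p = 1 := by
  ext i j
  simp [nbhdMatrix_apply, Matrix.one_apply, Subtype.ext_iff, h i j i.2 j.2]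

theorem nbhdMatrix_toBlock_eq_const_one_of_forall_adj {p q : V → Prop}
    (h : ∀ i j, p i → q j → H.Adj i j) :
    (nbhdMatrix H).toBlock p q = Matrix.of fun _ _ => 1 := by
  ext i j
  simp [nbhdMatrix_apply, h i j i.2 j.2]

end nbhdMatrix

/-- If the edge between distinct vertices `u` and `v` of a finite simple graph `Γ` is an
isolated edge (`u` and `v` are adjacent and both have degree 1), then Lights Out is
universally solvable on `Γᶜ` if and only if it is universally solvable on
`(Γ \ {u, v})ᶜ`, the complement of the graph obtained by deleting `u` and `v`. -/
theorem universallySolvable_compl_iff_of_isolated_edge {V : Type} [Fintype V]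
    [DecidableEq V] (G : SimpleGraph V) [DecidableRel G.Adj] (u v : V)
    (huv : G.Adj u v) (hu : G.degree u = 1) (hv : G.degree v = 1) :
    UniversallySolvable Gᶜ ↔
      UniversallySolvable (G.induce {w : V | w ≠ u ∧ w ≠ v})ᶜ := by
  set S : Set V := {w : V | w ≠ u ∧ w ≠ v}
  have hSc : ∀ x, x ∉ S ↔ x = u ∨ x = v := fun x => by
    simp only [S, Set.mem_ofPred_eq, not_and_or, not_not]
  have hS : ∀ w ∈ S, ∀ x ∉ S, Gᶜ.Adj w x := by
    rintro w ⟨hwu, hwv⟩ x hx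
    obtain rfl | rfl := (hSc x).1 hx
    exacts [G.compl_adj_of_degree_eq_one hu huv hwu hwv,
      G.compl_adj_of_degree_eq_one hv huv.symm hwv hwu]
  have hone : (nbhdMatrix Gᶜ).toBlock (· ∉ S) (· ∉ S) = 1 := by
    refine nbhdMatrix_toBlock_eq_one fun i j hi hj hij => hij.2 ?_
    obtain rfl | rfl := (hSc i).1 hi <;> obtain rfl | rfl := (hSc j).1 hj
    exacts [absurd rfl hij.1, huv, huv.symm, absurd rfl hij.1]
  have hcard : Fintype.card {w // w ∉ S} = 2 := by
    rw [Fintype.card_subtype]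
    simp [hSc, Finset.filter_or, Finset.filter_eq', Finset.card_pair huv.ne]
  have hzero : (nbhdMatrix Gᶜ).toBlock (· ∈ S) (· ∉ S) *
      (nbhdMatrix Gᶜ).toBlock (· ∉ S) (· ∈ S) = 0 := by
    rw [nbhdMatrix_toBlock_eq_const_one_of_forall_adj fun i j hi hj => hS i hi j hj,
      nbhdMatrix_toBlock_eq_const_one_of_forall_adj fun i j hi hj => (hS j hj i hi).symm,
      Matrix.of_const_one_mul_of_const_one, hcard]
    ext; rfl
  rw [UniversallySolvable, UniversallySolvable, Matrix.isUnit_iff_isUnit_det,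
    Matrix.isUnit_iff_isUnit_det,
    Matrix.det_eq_det_toBlock_of_toBlock_compl_eq_one _ _ hone hzero,
    nbhdMatrix_toBlock_eq_nbhdMatrix_induce, SimpleGraph.induce_compl]
end

section
/- Suppose a finite simple graph Γ has a vertex v of degree d ≥ 3, and Γ has at most d − 1 vertices of degree 2 or greater. Then Lights Out is not universally solvable on the complement graph Γ^C. -/
/-- If a finite simple graph `Γ` has a vertex `v` of degree `d ≥ 3` and at most `d - 1`
vertices of degree 2 or greater, then Lights Out is not universally solvable on the
complement graph `Γᶜ`. -/
theorem not_universallySolvable_compl_of_high_degree_vertex {V : Type} [Fintype V]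
    [DecidableEq V] (G : SimpleGraph V) [DecidableRel G.Adj] (v : V) (d : ℕ) (hd : 3 ≤ d)
    (hv : G.degree v = d)
    (hfew : (Finset.univ.filter fun w : V => 2 ≤ G.degree w).card ≤ d - 1) :
    ¬ UniversallySolvable Gᶜ := by
  classical
  -- Find two distinct neighbors of v with degree 1
  set S := Finset.univ.filter fun w : V => 2 ≤ G.degree w with hS
  have hvS : v ∈ S := by
    simp [hS]; omega
  set T := (G.neighborFinset v).filter fun w => 2 ≤ G.degree w with hT
  have hTsub : T ⊆ S.erase v := by
    intro w hw
    simp only [hT, Finset.mem_filter, SimpleGraph.mem_neighborFinset] at hw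
    refine Finset.mem_erase.2 ⟨fun h => G.irrefl (h ▸ hw.1), by simp [hS, hw.2]⟩
  have hTcard : T.card ≤ d - 2 := by
    have h1 : (S.erase v).card = S.card - 1 := Finset.card_erase_of_mem hvS
    have := Finset.card_le_card hTsub
    omega
  set U := (G.neighborFinset v).filter fun w => ¬ 2 ≤ G.degree w with hU
  have hUeq : U = (G.neighborFinset v) \ T := Finset.filter_not _ _
  have hUcard : 2 ≤ U.card := by
    rw [hUeq, Finset.card_sdiff_of_subset (Finset.filter_subset _ _)]
    rw [G.card_neighborFinset_eq_degree, hv, ← hT]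
    omega
  obtain ⟨a, ha, b, hb, hab⟩ := Finset.one_lt_card.mp hUcard
  simp only [hU, Finset.mem_filter, SimpleGraph.mem_neighborFinset, not_le] at ha hb
  -- a and b are adjacent only to v in G
  have hrowG : ∀ x : V, G.Adj v x → G.degree x < 2 → ∀ w, G.Adj x w ↔ w = v := by
    intro x hx hdeg w
    have hxv : v ∈ G.neighborFinset x := by simp [hx.symm]
    have hcard : (G.neighborFinset x).card ≤ 1 := by
      rw [G.card_neighborFinset_eq_degree]; omega
    have : G.neighborFinset x = {v} :=
      Finset.eq_singleton_iff_unique_mem.2 ⟨hxv, fun y hy => by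
        by_contra hne
        have := Finset.one_lt_card.2 ⟨y, hy, v, hxv, hne⟩
        omega⟩
    constructor
    · intro h
      have : w ∈ ({v} : Finset V) := this ▸ (SimpleGraph.mem_neighborFinset ..).2 h
      simpa using this
    · rintro rfl; exact hx.symm
  -- row of nbhdMatrix Gᶜ at x (for such x): 1 everywhere except at v
  have hrow : ∀ x : V, G.Adj v x → G.degree x < 2 →
      ∀ j, nbhdMatrix Gᶜ x j = if j = v then 0 else 1 := by
    intro x hx hdeg j
    have hxv : x ≠ v := fun h => G.irrefl (h ▸ hx)
    have key := hrowG x hx hdeg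
    simp only [nbhdMatrix, Matrix.of_apply, SimpleGraph.compl_adj]
    by_cases hjv : j = v
    · rw [hjv]
      have hnot : ¬ (x = v ∨ x ≠ v ∧ ¬G.Adj x v) := by
        push_neg
        exact ⟨hxv, fun _ => hx.symm⟩
      simp [hnot]
    · by_cases hjx : x = j
      · simp [hjx, hjv]
      · have : ¬ G.Adj x j := fun h => hjv ((key j).1 h)
        simp [hjx, hjv, this]
  -- the kernel vector
  have hex : ∃ x : V → ZMod 2, x ≠ 0 ∧ Matrix.vecMul x (nbhdMatrix Gᶜ) = 0 := by
    refine ⟨Pi.single a 1 + Pi.single b 1, ?_, ?_⟩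
    · intro h
      have := congrFun h a
      simp [Pi.single_apply, hab] at this
    · rw [Matrix.add_vecMul, Matrix.single_vecMul, Matrix.single_vecMul]
      funext j
      have h1 := hrow a ha.1 ha.2 j
      have h2 := hrow b hb.1 hb.2 j
      simp only [Pi.add_apply, Pi.zero_apply, one_mul, h1, h2]
      by_cases hjv : j = v <;> simp [hjv]
      all_goals simp [hrow a ha.1 ha.2, hrow b hb.1 hb.2, hjv]
      decide
  intro hu
  have hdet := Matrix.exists_vecMul_eq_zero_iff.mp (by
    obtain ⟨x, hx0, hx⟩ := hex
    exact ⟨x, hx0, hx⟩)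
  have := (Matrix.isUnit_iff_isUnit_det _).mp hu
  rw [hdet] at this
  simp at this
end

section
/- Suppose a finite simple graph Γ contains a 4-cycle that contains two distinct non-adjacent vertices each of degree 2 in Γ. Then Lights Out is not universally solvable on the complement graph Γ^C. -/
/-!
Opposite degree-2 vertices `u`, `v` of the 4-cycle are twins: both have neighborhood `{x, y}`.
In the complement, the closed neighborhood of a vertex is the complement of its open
neighborhood in `Γ`, so `u` and `v` get equal rows in the neighborhood matrix of `Γᶜ`,
whose determinant therefore vanishes.
-/

namespace SimpleGraph

variable {V : Type} [Fintype V] [DecidableEq V]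

theorem neighborFinset_eq_pair_of_degree_eq_two (G : SimpleGraph V) [DecidableRel G.Adj]
    {u x y : V} (hxy : x ≠ y) (hux : G.Adj u x) (huy : G.Adj u y) (hu : G.degree u = 2) :
    G.neighborFinset u = {x, y} := by
  refine (Finset.eq_of_subset_of_card_le ?_ ?_).symm
  · simp [Finset.insert_subset_iff, hux, huy]
  · rw [card_neighborFinset_eq_degree, hu, Finset.card_pair hxy]

theorem nbhdMatrix_compl_apply (G : SimpleGraph V) [DecidableRel G.Adj] (i j : V) :
    nbhdMatrix Gᶜ i j = if G.Adj i j then 0 else 1 := by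
  by_cases hij : i = j
  · subst hij
    simp [nbhdMatrix]
  · simp [nbhdMatrix, hij]

theorem not_universallySolvable_of_row_eq (G : SimpleGraph V) {u v : V} (huv : u ≠ v)
    (hrow : nbhdMatrix G u = nbhdMatrix G v) : ¬ UniversallySolvable G := by
  intro h
  have hdet := (Matrix.isUnit_iff_isUnit_det _).mp h
  rw [Matrix.det_zero_of_row_eq huv hrow] at hdet
  exact not_isUnit_zero hdet

theorem not_universallySolvable_compl_of_neighborFinset_eq (G : SimpleGraph V)
    [DecidableRel G.Adj] {u v : V} (huv : u ≠ v) (h : G.neighborFinset u = G.neighborFinset v) :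
    ¬ UniversallySolvable Gᶜ := by
  refine not_universallySolvable_of_row_eq Gᶜ huv (funext fun j => ?_)
  have hadj : G.Adj u j ↔ G.Adj v j := by
    rw [← mem_neighborFinset, ← mem_neighborFinset, h]
  simp only [nbhdMatrix_compl_apply, hadj]

end SimpleGraph

open SimpleGraph in
theorem not_universallySolvable_compl_of_four_cycle_general {V : Type} [Fintype V]
    [DecidableEq V] (G : SimpleGraph V) [DecidableRel G.Adj] (u v x y : V)
    (huv : u ≠ v) (hxy : x ≠ y)
    (hux : G.Adj u x) (hxv : G.Adj x v) (hvy : G.Adj v y) (hyu : G.Adj y u)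
    (hu2 : G.degree u = 2) (hv2 : G.degree v = 2) :
    ¬ UniversallySolvable Gᶜ := by
  refine not_universallySolvable_compl_of_neighborFinset_eq G huv ?_
  rw [neighborFinset_eq_pair_of_degree_eq_two G hxy hux hyu.symm hu2,
    neighborFinset_eq_pair_of_degree_eq_two G hxy hxv.symm hvy hv2]

/-- If a finite simple graph `Γ` contains a 4-cycle through vertices `u, x, v, y` in which
the opposite vertices `u` and `v` are distinct, non-adjacent, and both of degree 2 in `Γ`,
then Lights Out is not universally solvable on the complement graph `Γᶜ`. -/
theorem not_universallySolvable_compl_of_four_cycle {V : Type} [Fintype V]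
    [DecidableEq V] (G : SimpleGraph V) [DecidableRel G.Adj] (u v x y : V)
    (huv : u ≠ v) (hxy : x ≠ y)
    (hux : G.Adj u x) (hxv : G.Adj x v) (hvy : G.Adj v y) (hyu : G.Adj y u)
    (hnadj : ¬ G.Adj u v) (hu2 : G.degree u = 2) (hv2 : G.degree v = 2) :
    ¬ UniversallySolvable Gᶜ :=
  not_universallySolvable_compl_of_four_cycle_general G u v x y huv hxy hux hxv hvy hyu hu2 hv2
end

section
/- Let n be an even positive integer and d an odd positive integer. Then E^n_d = 0; that is, there is no graph Γ with n vertices and excess degree d such that Lights Out is universally solvable on the complement graph Γ^C. -/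
/-- The setoid on graphs on `Fin n` satisfying a property `P`, identifying isomorphic
graphs. Its quotient is the set of isomorphism classes of graphs satisfying `P`. -/
def isoSetoid {n : ℕ} (P : SimpleGraph (Fin n) → Prop) :
    Setoid {G : SimpleGraph (Fin n) // P G} where
  r G H := Nonempty (G.1 ≃g H.1)
  iseqv := ⟨fun _ => ⟨SimpleGraph.Iso.refl⟩,
            fun h => h.elim fun e => ⟨e.symm⟩,
            fun h₁ h₂ => h₁.elim fun e => h₂.elim fun f => ⟨e.trans f⟩⟩

/-- The excess degree of a graph `Γ` with `n` vertices:
`edeg(Γ) = i - n + ∑_{v ∈ VΓ} deg(v)`, where `i` is the number of isolated vertices. -/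
noncomputable def excessDegree {n : ℕ} (G : SimpleGraph (Fin n)) : ℤ :=
  (({v : Fin n | ∀ w, ¬ G.Adj v w} : Set (Fin n)).ncard : ℤ) - (n : ℤ)
    + ∑ v : Fin n, ((G.neighborSet v).ncard : ℤ)

/-- `E n d`: the number of isomorphism classes of graphs `Γ` with `n` vertices and excess
degree `d` for which Lights Out is universally solvable on the complement `Γᶜ`. -/
noncomputable def numExcess (n d : ℕ) : ℕ :=
  Nat.card (Quotient (isoSetoid fun G : SimpleGraph (Fin n) =>
    excessDegree G = (d : ℤ) ∧ UniversallySolvable Gᶜ))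

open Matrix in

lemma skew_det_zero_fin {m : ℕ} (hm : Odd m) (A : Matrix (Fin m) (Fin m) (ZMod 2))
    (hsym : ∀ i j, A i j = A j i) (hdiag : ∀ i, A i i = 0) : A.det = 0 := by
  set B : Matrix (Fin m) (Fin m) ℤ :=
    Matrix.of (fun i j => if i < j then ((A i j).val : ℤ)
      else if j < i then -((A i j).val : ℤ) else 0) with hB
  have hBT : Bᵀ = -B := by
    ext i j
    simp only [Matrix.transpose_apply, Matrix.neg_apply, hB, Matrix.of_apply]
    rcases lt_trichotomy i j with h | h | h
    · rw [if_neg (asymm h), if_pos h, if_pos h, hsym j i]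
    · subst h; simp
    · rw [if_pos h, if_neg (asymm h), if_pos h, hsym j i, neg_neg]
  have hdet : B.det = -B.det := by
    conv_lhs => rw [← Matrix.det_transpose, hBT, Matrix.det_neg, Fintype.card_fin,
      hm.neg_one_pow]
    ring
  have hB0 : B.det = 0 := by linarith
  have hmap : B.map (Int.cast : ℤ → ZMod 2) = A := by
    ext i j
    simp only [Matrix.map_apply, hB, Matrix.of_apply]
    rcases lt_trichotomy i j with h | h | h
    · rw [if_pos h]; push_cast; rw [ZMod.natCast_val, ZMod.cast_id]
    · subst h; simp [hdiag]
    · rw [if_neg (asymm h), if_pos h]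
      push_cast
      rw [ZMod.natCast_val, ZMod.cast_id, hsym i j, CharTwo.neg_eq]
  have h2 := RingHom.map_det (Int.castRingHom (ZMod 2)) B
  rw [hB0, RingHom.mapMatrix_apply] at h2
  simp only [map_zero] at h2
  exact hmap ▸ (h2.symm.trans (by norm_cast))

lemma skew_det_zero {ι : Type} [Fintype ι] [DecidableEq ι] (hm : Odd (Fintype.card ι))
    (A : Matrix ι ι (ZMod 2))
    (hsym : ∀ i j, A i j = A j i) (hdiag : ∀ i, A i i = 0) : A.det = 0 := by
  obtain e := (Fintype.equivFin ι).symm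
  rw [← Matrix.det_submatrix_equiv_self e A]
  exact skew_det_zero_fin hm _ (fun i j => hsym _ _) (fun i => hdiag _)

open scoped Classical in
lemma not_solvable {n : ℕ} (hne : Even n) (G : SimpleGraph (Fin n)) (v : Fin n)
    (hv : ∀ w, ¬ G.Adj v w) : ¬ UniversallySolvable Gᶜ := by
  intro hU
  set M := nbhdMatrix Gᶜ with hMdef
  have hM1 : ∀ i j, (i = j ∨ Gᶜ.Adj i j) → M i j = 1 := fun i j h => if_pos h
  have hM0 : ∀ i j, ¬(i = j ∨ Gᶜ.Adj i j) → M i j = 0 := fun i j h => if_neg h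
  have hcond : ∀ i j : Fin n, (i = j ∨ Gᶜ.Adj i j) ↔ (j = i ∨ Gᶜ.Adj j i) := by
    intro i j
    constructor
    · rintro (h | h); exacts [Or.inl h.symm, Or.inr h.symm]
    · rintro (h | h); exacts [Or.inl h.symm, Or.inr h.symm]
  have hMsym : ∀ i j, M i j = M j i := by
    intro i j
    by_cases h : i = j ∨ Gᶜ.Adj i j
    · rw [hM1 _ _ h, hM1 _ _ ((hcond i j).mp h)]
    · rw [hM0 _ _ h, hM0 _ _ (fun hc => h ((hcond i j).mpr hc))]
  have hMdiag : ∀ i, M i i = 1 := fun i => hM1 i i (Or.inl rfl)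
  have hMv : ∀ w, M v w = 1 := by
    intro w
    rcases eq_or_ne v w with h | h
    · rw [h, hMdiag]
    · exact hM1 v w (Or.inr ((G.compl_adj v w).mpr ⟨h, hv w⟩))
  set N : Matrix (Fin n) (Fin n) (ZMod 2) := M + Matrix.of (fun _ _ => 1) with hNdef
  have hNapp : ∀ i j, N i j = M i j + 1 := fun i j => rfl
  have hNsym : ∀ i j, N i j = N j i := fun i j => by rw [hNapp, hNapp, hMsym]
  have hNdiag : ∀ i, N i i = 0 := fun i => by
    rw [hNapp, hMdiag]; decide
  have hNv : ∀ w, N v w = 0 := fun w => by rw [hNapp, hMv]; decide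
  -- the submatrix on vertices ≠ v
  set N₀ : Matrix {w : Fin n // w ≠ v} {w : Fin n // w ≠ v} (ZMod 2) :=
    N.submatrix (fun w => (w : Fin n)) (fun w => (w : Fin n)) with hN₀
  have hcard : Odd (Fintype.card {w : Fin n // w ≠ v}) := by
    have h1 : Fintype.card {w : Fin n // w ≠ v} = n - 1 := by
      rw [Fintype.card_subtype, Finset.filter_ne' Finset.univ v,
        Finset.card_erase_of_mem (Finset.mem_univ v), Finset.card_univ, Fintype.card_fin]
    rw [h1]
    obtain ⟨k, hk⟩ := hne
    have : 0 < n := v.pos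
    rw [Nat.odd_iff]; omega
  have hdet0 : N₀.det = 0 :=
    skew_det_zero hcard N₀ (fun i j => hNsym _ _) (fun i => hNdiag _)
  obtain ⟨y, hy0, hy⟩ := (Matrix.exists_mulVec_eq_zero_iff).mpr hdet0
  set x : Fin n → ZMod 2 := fun w => if h : w = v then 0 else y ⟨w, h⟩ with hx
  have hxv : x v = 0 := by rw [hx]; simp
  have hxne : x ≠ 0 := by
    obtain ⟨u, hu⟩ := Function.ne_iff.mp hy0
    intro hcon
    apply hu
    show y u = 0
    have h1 : x u.1 = 0 := by rw [hcon]; rfl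
    simp only [hx] at h1
    rwa [dif_neg u.2] at h1
  have hNx : N.mulVec x = 0 := by
    funext w
    show ∑ u, N w u * x u = 0
    rw [← Finset.sum_erase Finset.univ (by rw [hxv, mul_zero])]
    rw [Finset.sum_subtype (p := fun u => u ≠ v) (Finset.univ.erase v)
      (by intro u; simp [Finset.mem_erase]) (fun u => N w u * x u)]
    rcases eq_or_ne w v with hwv | hwv
    · subst hwv
      apply Finset.sum_eq_zero
      intro u _
      rw [hNv, zero_mul]
    · have heq : ∀ u : {w : Fin n // w ≠ v}, N w u * x u = N₀ ⟨w, hwv⟩ u * y u := by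
        intro u
        simp only [hx, hN₀, Matrix.submatrix_apply]
        rw [dif_neg u.2]
      rw [Finset.sum_congr rfl (fun u _ => heq u)]
      exact congrFun hy ⟨w, hwv⟩
  have hMx : M.mulVec x = fun _ => ∑ u, x u := by
    funext w
    show ∑ u, M w u * x u = _
    have heq : ∀ u, M w u * x u = N w u * x u + x u := by
      intro u
      rw [hNapp]
      ring_nf
      rw [show (2 : ZMod 2) = 0 from rfl]
      ring
    rw [Finset.sum_congr rfl (fun u _ => heq u), Finset.sum_add_distrib,
      show ∑ u, N w u * x u = 0 from congrFun hNx w, zero_add]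
  have hinj : Function.Injective M.mulVec := Matrix.mulVec_injective_iff_isUnit.mpr hU
  have hs : (∑ u, x u) = 0 ∨ (∑ u, x u) = 1 := by
    have h01 : ∀ t : ZMod 2, t = 0 ∨ t = 1 := by decide
    exact h01 _
  rcases hs with hs | hs
  · apply hxne
    apply hinj
    rw [hMx, hs]
    funext w
    simp [Matrix.mulVec_zero]
  · have hsingle := Matrix.mulVec_single M v (1 : ZMod 2)
    have hxeq : x = Pi.single v 1 := by
      apply hinj
      rw [hMx, hs, hsingle]
      funext w
      simp only [Pi.smul_apply, MulOpposite.op_one, one_smul, Matrix.col_apply, Matrix.transpose_apply]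
      rw [hMsym w v, hMv]
    have := congrFun hxeq v
    rw [hxv, Pi.single_eq_same] at this
    exact zero_ne_one this

/-- If `n` is even and `d` is odd (both positive), then `E^n_d = 0`: there is no graph
with `n` vertices and excess degree `d` whose complement has a universally solvable game
of Lights Out. -/
theorem numExcess_eq_zero_of_even_odd (n d : ℕ) (hn : 0 < n) (hneven : Even n)
    (hd : 0 < d) (hdodd : Odd d) :
    numExcess n d = 0 := by
  classical
  have hempty : IsEmpty {G : SimpleGraph (Fin n) //
      excessDegree G = (d : ℤ) ∧ UniversallySolvable Gᶜ} := by
    constructor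
    rintro ⟨G, hdeg, hsol⟩
    by_cases hiso : ∃ v, ∀ w, ¬ G.Adj v w
    · obtain ⟨v, hv⟩ := hiso
      exact not_solvable hneven G v hv hsol
    · have hset : ({v : Fin n | ∀ w, ¬ G.Adj v w} : Set (Fin n)) = ∅ := by
        ext v
        simp only [Set.mem_setOf_eq, Set.mem_empty_iff_false, iff_false, not_forall, not_not]
        by_contra hcon
        push_neg at hcon
        exact hiso ⟨v, hcon⟩
      have hncard : ∀ v : Fin n, (G.neighborSet v).ncard = G.degree v := by
        intro v
        rw [← Nat.card_coe_set_eq, Nat.card_eq_fintype_card,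
          SimpleGraph.card_neighborSet_eq_degree]
      have heven : Even (∑ v : Fin n, (G.neighborSet v).ncard) := by
        rw [Finset.sum_congr rfl (fun v _ => hncard v),
          SimpleGraph.sum_degrees_eq_twice_card_edges]
        exact even_two_mul _
      rw [excessDegree, hset] at hdeg
      rw [Set.ncard_empty] at hdeg
      rw [← Nat.cast_sum] at hdeg
      obtain ⟨a, ha⟩ := heven
      obtain ⟨b, hb⟩ := hneven
      obtain ⟨c, hc⟩ := hdodd
      rw [ha, hb, hc] at hdeg
      omega
  have hq : IsEmpty (Quotient (isoSetoid fun G : SimpleGraph (Fin n) =>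
      excessDegree G = (d : ℤ) ∧ UniversallySolvable Gᶜ)) := by
    constructor
    intro q
    obtain ⟨g, -⟩ := q.exists_rep
    exact hempty.false g
  rw [numExcess]
  exact @Nat.card_of_isEmpty _ hq
end

section
/- For every positive integer n, E^n_0 = 1; that is, there is exactly one isomorphism class of graphs Γ with n vertices and excess degree 0 such that Lights Out is universally solvable on the complement graph Γ^C. -/
namespace LightsOutAux

open SimpleGraph Finset

variable {n : ℕ}

/-- isolated iff degree zero -/
lemma isolated_iff (G : SimpleGraph (Fin n)) [DecidableRel G.Adj] (v : Fin n) :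
    (∀ w, ¬ G.Adj v w) ↔ G.degree v = 0 := by
  rw [SimpleGraph.degree, Finset.card_eq_zero, Finset.eq_empty_iff_forall_notMem]
  simp [SimpleGraph.mem_neighborFinset]

lemma ncard_neighborSet (G : SimpleGraph (Fin n)) [DecidableRel G.Adj] (v : Fin n) :
    (G.neighborSet v).ncard = G.degree v := by
  rw [← Nat.card_coe_set_eq, Nat.card_eq_fintype_card,
    SimpleGraph.card_neighborSet_eq_degree]

lemma ncard_isolated (G : SimpleGraph (Fin n)) [DecidableRel G.Adj] :
    ({v : Fin n | ∀ w, ¬ G.Adj v w} : Set (Fin n)).ncard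
      = (Finset.univ.filter fun v : Fin n => ∀ w, ¬ G.Adj v w).card := by
  classical
  rw [Set.ncard_eq_toFinset_card', Set.toFinset_setOf]

lemma excess_eq (G : SimpleGraph (Fin n)) [DecidableRel G.Adj] :
    excessDegree G
      = ∑ v : Fin n, (((G.degree v : ℤ) - 1) + if ∀ w, ¬ G.Adj v w then 1 else 0) := by
  classical
  rw [excessDegree, ncard_isolated]
  rw [Finset.sum_add_distrib, Finset.sum_sub_distrib, Finset.sum_boole]
  simp only [ncard_neighborSet, Finset.sum_const, Finset.card_univ, Fintype.card_fin,
    nsmul_eq_mul, mul_one]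
  push_cast
  ring

lemma excessDegree_eq_zero_iff (G : SimpleGraph (Fin n)) [DecidableRel G.Adj] :
    excessDegree G = 0 ↔ ∀ v, G.degree v ≤ 1 := by
  classical
  rw [excess_eq]
  have hnn : ∀ v ∈ Finset.univ, (0:ℤ) ≤
      ((G.degree v : ℤ) - 1) + if ∀ w, ¬ G.Adj v w then 1 else 0 := by
    intro v _
    by_cases h : ∀ w, ¬ G.Adj v w
    · have : G.degree v = 0 := (isolated_iff G v).mp h
      simp [h, this]
    · have : G.degree v ≠ 0 := fun h0 => h ((isolated_iff G v).mpr h0)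
      have h1 : 1 ≤ G.degree v := Nat.one_le_iff_ne_zero.mpr this
      rw [if_neg h]
      push_cast
      omega
  rw [Finset.sum_eq_zero_iff_of_nonneg hnn]
  constructor
  · intro h v
    have := h v (Finset.mem_univ v)
    by_cases hi : ∀ w, ¬ G.Adj v w
    · have : G.degree v = 0 := (isolated_iff G v).mp hi
      omega
    · rw [if_neg hi] at this
      omega
  · intro h v _
    by_cases hi : ∀ w, ¬ G.Adj v w
    · have : G.degree v = 0 := (isolated_iff G v).mp hi
      simp [hi, this]
    · have hne : G.degree v ≠ 0 := fun h0 => hi ((isolated_iff G v).mpr h0)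
      have h1 : G.degree v = 1 := by have := h v; omega
      simp [hi, h1]

section Matching

variable (G : SimpleGraph (Fin n)) [DecidableRel G.Adj]

lemma unique_nbr (hdeg : ∀ v, G.degree v ≤ 1) {v w w' : Fin n}
    (h : G.Adj v w) (h' : G.Adj v w') : w = w' :=
  Finset.card_le_one.mp (hdeg v) w ((G.mem_neighborFinset v w).mpr h)
    w' ((G.mem_neighborFinset v w').mpr h')

open scoped Classical in
/-- the partner function of a matching -/
noncomputable def pf : Fin n → Fin n :=
  fun v => if h : ∃ w, G.Adj v w then h.choose else v

lemma pf_adj {v : Fin n} (h : ∃ w, G.Adj v w) : G.Adj v (pf G v) := by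
  rw [pf, dif_pos h]
  exact h.choose_spec

lemma pf_eq_self {v : Fin n} (h : ¬ ∃ w, G.Adj v w) : pf G v = v := by
  rw [pf, dif_neg h]

lemma pf_fixed_iff (v : Fin n) : pf G v = v ↔ ∀ w, ¬ G.Adj v w := by
  constructor
  · intro h w hw
    have := pf_adj G ⟨w, hw⟩
    rw [h] at this
    exact G.loopless.irrefl v this
  · intro h
    exact pf_eq_self G (by push_neg; exact h)

lemma pf_invol (hdeg : ∀ v, G.degree v ≤ 1) : Function.Involutive (pf G) := by
  intro v
  by_cases h : ∃ w, G.Adj v w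
  · have h1 : G.Adj v (pf G v) := pf_adj G h
    have h3 : G.Adj (pf G v) (pf G (pf G v)) := pf_adj G ⟨v, h1.symm⟩
    exact unique_nbr G hdeg h3 h1.symm
  · rw [pf_eq_self G h, pf_eq_self G h]

lemma adj_iff_pf (hdeg : ∀ v, G.degree v ≤ 1) (v w : Fin n) :
    G.Adj v w ↔ v ≠ w ∧ pf G v = w := by
  constructor
  · intro h
    exact ⟨h.ne, unique_nbr G hdeg (pf_adj G ⟨w, h⟩) h⟩
  · rintro ⟨hne, rfl⟩
    by_cases h : ∃ w, G.Adj v w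
    · exact pf_adj G h
    · exact absurd (pf_eq_self G h).symm hne

lemma degree_eq_ite (hdeg : ∀ v, G.degree v ≤ 1) (v : Fin n) :
    G.degree v = if pf G v = v then 0 else 1 := by
  by_cases h : pf G v = v
  · rw [if_pos h, ← isolated_iff]
    exact (pf_fixed_iff G v).mp h
  · rw [if_neg h]
    have hne : G.degree v ≠ 0 := by
      intro h0
      exact h ((pf_fixed_iff G v).mpr ((isolated_iff G v).mpr h0))
    have := hdeg v
    omega

lemma even_nonfixed (hdeg : ∀ v, G.degree v ≤ 1) :
    Even (Finset.univ.filter fun v : Fin n => pf G v ≠ v).card := by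
  classical
  have h1 : (Finset.univ.filter fun v : Fin n => pf G v ≠ v).card
      = ∑ v : Fin n, G.degree v := by
    rw [Finset.card_filter]
    refine Finset.sum_congr rfl fun v _ => ?_
    rw [degree_eq_ite G hdeg]
    by_cases h : pf G v = v <;> simp [h]
  rw [h1, G.sum_degrees_eq_twice_card_edges]
  exact ⟨G.edgeFinset.card, two_mul _⟩

end Matching

end LightsOutAux
namespace LightsOutAux

open SimpleGraph Finset

variable {n : ℕ}

open scoped Classical in
lemma nbhd_compl_apply (G : SimpleGraph (Fin n)) (v w : Fin n) :
    nbhdMatrix Gᶜ v w = if G.Adj v w then 0 else 1 := by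
  rw [nbhdMatrix, Matrix.of_apply]
  by_cases h : G.Adj v w
  · rw [if_pos h, if_neg]
    rintro (rfl | hc)
    · exact G.loopless.irrefl v h
    · exact hc.2 h
  · rw [if_neg h, if_pos]
    by_cases hvw : v = w
    · exact Or.inl hvw
    · exact Or.inr ((G.compl_adj v w).mpr ⟨hvw, h⟩)

lemma not_solvable_of_two_isolated (G : SimpleGraph (Fin n)) {u w : Fin n}
    (hu : ∀ x, ¬ G.Adj u x) (hw : ∀ x, ¬ G.Adj w x) (hne : u ≠ w) :
    ¬ UniversallySolvable Gᶜ := by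
  classical
  rw [UniversallySolvable, Matrix.isUnit_iff_isUnit_det, isUnit_iff_ne_zero, not_not]
  rw [← Matrix.exists_mulVec_eq_zero_iff]
  refine ⟨Pi.single u 1 + Pi.single w 1, ?_, ?_⟩
  · intro h0
    have h1 := congrFun h0 u
    rw [Pi.add_apply, Pi.single_apply, Pi.single_apply, if_pos rfl, if_neg hne,
      Pi.zero_apply] at h1
    simp at h1
  · rw [Matrix.mulVec_add, Matrix.mulVec_single, Matrix.mulVec_single]
    funext j
    have h1 : nbhdMatrix Gᶜ j u = 1 := by
      rw [nbhd_compl_apply, if_neg (fun h => hu j h.symm)]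
    have h2 : nbhdMatrix Gᶜ j w = 1 := by
      rw [nbhd_compl_apply, if_neg (fun h => hw j h.symm)]
    simp only [Pi.add_apply, Pi.smul_apply, Matrix.col_apply, MulOpposite.op_one, one_smul, h1, h2, mul_one, Pi.zero_apply]
    decide

lemma neighborFinset_eq (G : SimpleGraph (Fin n)) [DecidableRel G.Adj]
    (hdeg : ∀ v, G.degree v ≤ 1) (j : Fin n) :
    G.neighborFinset j = if pf G j = j then ∅ else {pf G j} := by
  ext l
  rw [SimpleGraph.mem_neighborFinset, adj_iff_pf G hdeg]
  by_cases h : pf G j = j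
  · simp only [if_pos h, Finset.notMem_empty, iff_false]
    rintro ⟨hne, rfl⟩
    exact hne h.symm
  · simp only [if_neg h, Finset.mem_singleton]
    constructor
    · rintro ⟨_, rfl⟩; rfl
    · rintro rfl
      exact ⟨fun he => h he.symm, rfl⟩

lemma solvable_of (G : SimpleGraph (Fin n)) [DecidableRel G.Adj]
    (hdeg : ∀ v, G.degree v ≤ 1)
    (hiso : ∀ u w : Fin n, (∀ x, ¬ G.Adj u x) → (∀ x, ¬ G.Adj w x) → u = w) :
    UniversallySolvable Gᶜ := by
  classical
  rw [UniversallySolvable, Matrix.isUnit_iff_isUnit_det, isUnit_iff_ne_zero]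
  intro hdet
  obtain ⟨x, hx0, hx⟩ := Matrix.exists_mulVec_eq_zero_iff.mpr hdet
  apply hx0
  set s : ZMod 2 := ∑ l : Fin n, x l with hs_def
  have key : ∀ j : Fin n, (if pf G j = j then 0 else x (pf G j)) = s := by
    intro j
    have hj := congrFun hx j
    have hrow : (nbhdMatrix Gᶜ).mulVec x j
        = s - ∑ l ∈ G.neighborFinset j, x l := by
      rw [Matrix.mulVec, dotProduct]
      have hterm : ∀ l : Fin n, nbhdMatrix Gᶜ j l * x l
          = x l - (if l ∈ G.neighborFinset j then x l else 0) := by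
        intro l
        rw [nbhd_compl_apply]
        by_cases h : G.Adj j l <;>
          simp [h, SimpleGraph.mem_neighborFinset]
      rw [Finset.sum_congr rfl fun l _ => hterm l, Finset.sum_sub_distrib,
        Finset.sum_ite_mem, Finset.univ_inter]
    rw [hrow, neighborFinset_eq G hdeg, Pi.zero_apply] at hj
    by_cases h : pf G j = j
    · rw [if_pos h] at hj ⊢
      rw [Finset.sum_empty, sub_zero] at hj
      exact hj.symm
    · rw [if_neg h] at hj ⊢
      rw [Finset.sum_singleton] at hj
      exact (sub_eq_zero.mp hj).symm
  by_cases hfix : ∃ j0, pf G j0 = j0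
  · obtain ⟨j0, hj0⟩ := hfix
    have hs : s = 0 := by
      have hk := key j0
      rw [if_pos hj0] at hk
      exact hk.symm
    have hNI : ∀ l, pf G l ≠ l → x l = 0 := by
      intro l hl
      have h2 : pf G (pf G l) = l := pf_invol G hdeg l
      have h3 : ¬ pf G (pf G l) = pf G l := by
        rw [h2]; exact fun he => hl he.symm
      have hk := key (pf G l)
      rw [if_neg h3, h2] at hk
      rw [hk, hs]
    have hother : ∀ l, l ≠ j0 → x l = 0 := by
      intro l hl
      by_cases h : pf G l = l
      · exact absurd
          (hiso l j0 ((pf_fixed_iff G l).mp h) ((pf_fixed_iff G j0).mp hj0)) hl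
      · exact hNI l h
    have hxj0 : x j0 = 0 := by
      have hsx : s = x j0 := by
        rw [hs_def]
        exact Finset.sum_eq_single j0 (fun b _ hb => hother b hb)
          (fun h => absurd (Finset.mem_univ j0) h)
      rw [← hsx, hs]
    funext l
    rw [Pi.zero_apply]
    by_cases h : l = j0
    · rw [h]; exact hxj0
    · exact hother l h
  · push_neg at hfix
    have hconst : ∀ l, x l = s := by
      intro l
      have h2 : pf G (pf G l) = l := pf_invol G hdeg l
      have h3 : ¬ pf G (pf G l) = pf G l := by
        rw [h2]; exact fun he => hfix l he.symm
      have hk := key (pf G l)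
      rwa [if_neg h3, h2] at hk
    have hn2 : (n : ZMod 2) = 0 := by
      rw [ZMod.natCast_eq_zero_iff]
      have hev := even_nonfixed G hdeg
      have huniv : (Finset.univ.filter fun v : Fin n => pf G v ≠ v) = Finset.univ :=
        Finset.filter_true_of_mem (fun v _ => hfix v)
      rw [huniv, Finset.card_univ, Fintype.card_fin] at hev
      exact hev.two_dvd
    have hs : s = 0 := by
      have hcalc : s = (n : ZMod 2) * s := by
        calc s = ∑ l : Fin n, x l := hs_def
          _ = ∑ _l : Fin n, s := Finset.sum_congr rfl fun l _ => hconst l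
          _ = Finset.univ.card • s := Finset.sum_const s
          _ = (n : ZMod 2) * s := by
              rw [Finset.card_univ, Fintype.card_fin, nsmul_eq_mul]
      rw [hcalc, hn2, zero_mul]
    funext l
    rw [Pi.zero_apply, hconst l, hs]

end LightsOutAux
namespace LightsOutAux

open SimpleGraph Finset

variable {n : ℕ}

lemma cycleType_invol (σ : Equiv.Perm (Fin n)) (h : σ * σ = 1) :
    σ.cycleType = Multiset.replicate (σ.support.card / 2) 2 := by
  have h2 : ∀ a ∈ σ.cycleType, a = 2 := by
    intro a ha
    have hd : a ∣ orderOf σ := σ.lcm_cycleType ▸ Multiset.dvd_lcm ha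
    have ho : orderOf σ ∣ 2 := orderOf_dvd_of_pow_eq_one (by rw [pow_two]; exact h)
    have h1 := Nat.le_of_dvd two_pos (hd.trans ho)
    have h2 := Equiv.Perm.two_le_of_mem_cycleType ha
    omega
  have hcard : σ.cycleType = Multiset.replicate (Multiset.card σ.cycleType) 2 :=
    Multiset.eq_replicate_card.mpr h2
  have hsum := σ.sum_cycleType
  rw [hcard, Multiset.sum_replicate, smul_eq_mul] at hsum
  rw [hcard]
  congr 1
  omega

/-- the permutation associated to a matching -/
noncomputable def mperm (G : SimpleGraph (Fin n)) [DecidableRel G.Adj]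
    (hdeg : ∀ v, G.degree v ≤ 1) : Equiv.Perm (Fin n) :=
  Function.Involutive.toPerm (pf G) (pf_invol G hdeg)

lemma mperm_apply (G : SimpleGraph (Fin n)) [DecidableRel G.Adj]
    (hdeg : ∀ v, G.degree v ≤ 1) (v : Fin n) : mperm G hdeg v = pf G v := rfl

lemma mperm_sq (G : SimpleGraph (Fin n)) [DecidableRel G.Adj]
    (hdeg : ∀ v, G.degree v ≤ 1) : mperm G hdeg * mperm G hdeg = 1 := by
  ext v
  rw [Equiv.Perm.mul_apply, mperm_apply, mperm_apply, pf_invol G hdeg v]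
  rfl

open scoped Classical in
lemma mperm_support_card (G : SimpleGraph (Fin n)) [DecidableRel G.Adj]
    (hdeg : ∀ v, G.degree v ≤ 1)
    (hiso : ∀ u w : Fin n, (∀ x, ¬ G.Adj u x) → (∀ x, ¬ G.Adj w x) → u = w) :
    (mperm G hdeg).support.card = n - n % 2 := by
  classical
  have hsupp : (mperm G hdeg).support
      = Finset.univ.filter fun v : Fin n => pf G v ≠ v := by
    ext v
    simp [Equiv.Perm.mem_support, mperm_apply]
  have heven : Even (mperm G hdeg).support.card := by
    rw [hsupp]
    convert even_nonfixed G hdeg using 2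
  have hadd : (Finset.univ.filter fun v : Fin n => pf G v = v).card
      + (mperm G hdeg).support.card = n := by
    rw [hsupp]
    have := Finset.card_filter_add_card_filter_not
      (s := (Finset.univ : Finset (Fin n))) (fun v : Fin n => pf G v = v)
    simpa [Finset.card_univ] using this
  have hle : (Finset.univ.filter fun v : Fin n => pf G v = v).card ≤ 1 := by
    rw [Finset.card_le_one]
    intro a ha b hb
    rw [Finset.mem_filter] at ha hb
    exact hiso a b ((pf_fixed_iff G a).mp ha.2) ((pf_fixed_iff G b).mp hb.2)
  obtain ⟨k, hk⟩ := heven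
  omega

lemma iso_of (G H : SimpleGraph (Fin n)) [DecidableRel G.Adj] [DecidableRel H.Adj]
    (hdG : ∀ v, G.degree v ≤ 1) (hdH : ∀ v, H.degree v ≤ 1)
    (hiG : ∀ u w : Fin n, (∀ x, ¬ G.Adj u x) → (∀ x, ¬ G.Adj w x) → u = w)
    (hiH : ∀ u w : Fin n, (∀ x, ¬ H.Adj u x) → (∀ x, ¬ H.Adj w x) → u = w) :
    Nonempty (G ≃g H) := by
  classical
  have hconj : IsConj (mperm G hdG) (mperm H hdH) := by
    rw [Equiv.Perm.isConj_iff_cycleType_eq, cycleType_invol _ (mperm_sq G hdG),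
      cycleType_invol _ (mperm_sq H hdH), mperm_support_card G hdG hiG,
      mperm_support_card H hdH hiH]
  obtain ⟨c, hc⟩ := isConj_iff.mp hconj
  have hcomm : ∀ v, c (pf G v) = pf H (c v) := by
    intro v
    have := congrFun (congrArg (fun p : Equiv.Perm (Fin n) => (p : Fin n → Fin n)) hc) (c v)
    simp only [Equiv.Perm.coe_mul, Function.comp_apply, Equiv.Perm.inv_def, Equiv.symm_apply_apply] at this
    exact this
  refine ⟨⟨c, ?_⟩⟩
  intro v w
  rw [adj_iff_pf G hdG, adj_iff_pf H hdH, ← hcomm v]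
  constructor
  · rintro ⟨h1, h2⟩
    exact ⟨fun he => h1 (congrArg c he), c.injective h2⟩
  · rintro ⟨h1, h2⟩
    exact ⟨fun he => h1 (c.injective he), congrArg c h2⟩

/-- the canonical maximal matching on `Fin n` -/
def MG (n : ℕ) : SimpleGraph (Fin n) where
  Adj v w := v ≠ w ∧ (v : ℕ) / 2 = (w : ℕ) / 2
  symm := ⟨fun v w h => ⟨Ne.symm h.1, h.2.symm⟩⟩
  loopless := ⟨fun v h => h.1 rfl⟩

lemma MG_deg [DecidableRel (MG n).Adj] (v : Fin n) : (MG n).degree v ≤ 1 := by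
  rw [SimpleGraph.degree, Finset.card_le_one]
  intro a ha b hb
  rw [SimpleGraph.mem_neighborFinset] at ha hb
  obtain ⟨ha1, ha2⟩ := ha
  obtain ⟨hb1, hb2⟩ := hb
  have hav : (v : ℕ) ≠ (a : ℕ) := fun h => ha1 (Fin.val_injective h)
  have hbv : (v : ℕ) ≠ (b : ℕ) := fun h => hb1 (Fin.val_injective h)
  have : (a : ℕ) = (b : ℕ) := by omega
  exact Fin.val_injective this

lemma MG_iso (u w : Fin n) (hu : ∀ x, ¬ (MG n).Adj u x) (hw : ∀ x, ¬ (MG n).Adj w x) :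
    u = w := by
  have key : ∀ v : Fin n, (∀ x, ¬ (MG n).Adj v x) → (v : ℕ) = n - 1 ∧ (v : ℕ) % 2 = 0 := by
    intro v hv
    have hvn : (v : ℕ) < n := v.isLt
    have hmain : ∀ m : ℕ, (hm : m < n) → m ≠ (v : ℕ) → ¬ ((v : ℕ) / 2 = m / 2) := by
      intro m hm hne heq
      apply hv ⟨m, hm⟩
      refine ⟨fun h => hne ?_, heq⟩
      rw [Fin.ext_iff] at h
      exact h.symm
    by_cases hpar : (v : ℕ) % 2 = 1
    · exact absurd (by omega : (v : ℕ) / 2 = ((v : ℕ) - 1) / 2)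
        (hmain ((v : ℕ) - 1) (by omega) (by omega))
    · by_cases hv1 : (v : ℕ) + 1 < n
      · exact absurd (by omega : (v : ℕ) / 2 = ((v : ℕ) + 1) / 2)
          (hmain ((v : ℕ) + 1) hv1 (by omega))
      · exact ⟨by omega, by omega⟩
  have hu' := key u hu
  have hw' := key w hw
  apply Fin.val_injective
  omega

end LightsOutAux

/-- For every positive integer `n`, `E^n_0 = 1`: there is exactly one isomorphism class
of graphs with `n` vertices and excess degree `0` whose complement has a universally
solvable game of Lights Out. -/
theorem numExcess_zero_eq_one (n : ℕ) (hn : 0 < n) : numExcess n 0 = 1 := by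
  classical
  unfold numExcess
  rw [Nat.card_eq_one_iff_unique]
  have hP : ∀ G : SimpleGraph (Fin n),
      (excessDegree G = ((0 : ℕ) : ℤ) ∧ UniversallySolvable Gᶜ) →
      (∀ v, G.degree v ≤ 1) ∧
      (∀ u w : Fin n, (∀ x, ¬ G.Adj u x) → (∀ x, ¬ G.Adj w x) → u = w) := by
    intro G hG
    constructor
    · exact (LightsOutAux.excessDegree_eq_zero_iff G).mp (by simpa using hG.1)
    · intro u w hu hw
      by_contra hne
      exact LightsOutAux.not_solvable_of_two_isolated G hu hw hne hG.2
  constructor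
  · constructor
    intro a b
    refine Quotient.inductionOn₂ a b fun ⟨G, hG⟩ ⟨H, hH⟩ => ?_
    obtain ⟨hdG, hiG⟩ := hP G hG
    obtain ⟨hdH, hiH⟩ := hP H hH
    exact Quotient.sound (LightsOutAux.iso_of G H hdG hdH hiG hiH)
  · refine ⟨Quotient.mk _ ⟨LightsOutAux.MG n, ?_, ?_⟩⟩
    · rw [Nat.cast_zero]
      exact (LightsOutAux.excessDegree_eq_zero_iff (LightsOutAux.MG n)).mpr
        (fun v => LightsOutAux.MG_deg v)
    · exact LightsOutAux.solvable_of _ (fun v => LightsOutAux.MG_deg v) LightsOutAux.MG_iso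
end

section
/- For every integer n ≥ 3, E^n_1 = 0; that is, there is no graph Γ with n vertices and excess degree 1 such that Lights Out is universally solvable on the complement graph Γ^C. -/
open Finset Matrix in
theorem key {n : ℕ} (G : SimpleGraph (Fin n))
    (hG : excessDegree G = 1) : ¬ UniversallySolvable Gᶜ := by
  classical
  have hdeg : ∀ v, (G.neighborSet v).ncard = G.degree v := fun v => by
    rw [Set.ncard_eq_toFinset_card']
    rfl
  set S : Finset (Fin n) := univ.filter (fun v => G.degree v ≠ 0) with hS
  have hiso : ({v : Fin n | ∀ w, ¬ G.Adj v w} : Set (Fin n)).ncard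
      = (univ.filter (fun v => G.degree v = 0)).card := by
    rw [Set.ncard_eq_toFinset_card']
    congr 1
    ext v
    simp only [Set.mem_toFinset, Set.mem_setOf_eq, Finset.mem_filter, Finset.mem_univ, true_and]
    rw [SimpleGraph.degree, Finset.card_eq_zero, Finset.eq_empty_iff_forall_notMem]
    simp [SimpleGraph.mem_neighborFinset]
  have hcards : (univ.filter (fun v => G.degree v = 0)).card + S.card = n := by
    have := Finset.card_filter_add_card_filter_not (s := (univ : Finset (Fin n)))
      (p := fun v => G.degree v = 0)
    simpa [hS] using this
  have hsum2 : ∑ v ∈ S, ((G.degree v : ℤ)) = ∑ v : Fin n, ((G.degree v : ℤ)) := by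
    rw [hS]
    apply Finset.sum_filter_of_ne
    intro v _ h h0
    simp [h0] at h
  have hgd : excessDegree G = (((univ.filter (fun v => G.degree v = 0)).card : ℤ)) - n
      + ∑ v : Fin n, ((G.degree v : ℤ)) := by
    rw [excessDegree, hiso]
    congr 1
    apply Finset.sum_congr rfl
    intro v _
    rw [hdeg]
  have hcards' : ((univ.filter (fun v => G.degree v = 0)).card : ℤ) + (S.card : ℤ) = n := by
    exact_mod_cast hcards
  have hsum : ∑ v ∈ S, ((G.degree v : ℤ) - 1) = 1 := by
    rw [Finset.sum_sub_distrib, Finset.sum_const, hsum2, nsmul_eq_mul, mul_one]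
    rw [hgd] at hG
    linarith
  have hnonneg : ∀ v ∈ S, 0 ≤ (G.degree v : ℤ) - 1 := by
    intro v hv
    rw [hS, Finset.mem_filter] at hv
    have : 1 ≤ G.degree v := Nat.one_le_iff_ne_zero.mpr hv.2
    exact_mod_cast by omega
  -- find the special vertex b
  have hb : ∃ b ∈ S, 2 ≤ G.degree b := by
    by_contra h
    push_neg at h
    have h0 : ∑ v ∈ S, ((G.degree v : ℤ) - 1) ≤ 0 := by
      apply Finset.sum_nonpos
      intro v hv
      have := h v hv
      have : (G.degree v : ℤ) < 2 := by exact_mod_cast this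
      linarith
    omega
  obtain ⟨b, hbS, hb2⟩ := hb
  have hsplit : ((G.degree b : ℤ) - 1) + ∑ v ∈ S.erase b, ((G.degree v : ℤ) - 1)
      = ∑ v ∈ S, ((G.degree v : ℤ) - 1) :=
    Finset.add_sum_erase S (fun v => (G.degree v : ℤ) - 1) hbS
  have herasenn : 0 ≤ ∑ v ∈ S.erase b, ((G.degree v : ℤ) - 1) :=
    Finset.sum_nonneg fun v hv => hnonneg v (Finset.mem_of_mem_erase hv)
  have hb2' : (2 : ℤ) ≤ (G.degree b : ℤ) := by exact_mod_cast hb2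
  have hdb : G.degree b = 2 := by
    have : (G.degree b : ℤ) - 1 ≤ 1 := by
      rw [← hsplit] at hsum
      linarith
    have : (G.degree b : ℤ) = 2 := by linarith
    exact_mod_cast this
  have herase0 : ∑ v ∈ S.erase b, ((G.degree v : ℤ) - 1) = 0 := by
    rw [← hsplit, hdb] at hsum
    push_cast at hsum
    linarith
  have hrest : ∀ v, v ≠ b → G.degree v ≤ 1 := by
    intro v hvb
    by_cases hvS : v ∈ S
    · have hv' : v ∈ S.erase b := Finset.mem_erase.mpr ⟨hvb, hvS⟩
      have := (Finset.sum_eq_zero_iff_of_nonneg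
        (fun w hw => hnonneg w (Finset.mem_of_mem_erase hw))).mp herase0 v hv'
      have : (G.degree v : ℤ) = 1 := by linarith
      omega
    · rw [hS, Finset.mem_filter] at hvS
      push_neg at hvS
      have := hvS (Finset.mem_univ v)
      omega
  -- extract the two neighbors of b
  have hdb' : (G.neighborFinset b).card = 2 := hdb
  obtain ⟨a, c, hac, habc⟩ := Finset.card_eq_two.mp hdb'
  have hba : G.Adj b a := by
    rw [← SimpleGraph.mem_neighborFinset, habc]; simp
  have hbc : G.Adj b c := by
    rw [← SimpleGraph.mem_neighborFinset, habc]; simp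
  have hnbr : ∀ x, G.Adj b x → (∀ u, G.Adj u x ↔ u = b) := by
    intro x hbx u
    have hxb : x ≠ b := fun h => G.irrefl (h ▸ hbx)
    have hx1 : G.degree x = 1 := by
      have hle := hrest x hxb
      have : 1 ≤ G.degree x := by
        rw [← SimpleGraph.card_neighborFinset_eq_degree]
        exact Finset.card_pos.mpr ⟨b, by rw [SimpleGraph.mem_neighborFinset]; exact hbx.symm⟩
      omega
    obtain ⟨y, hy⟩ := Finset.card_eq_one.mp (hx1 : (G.neighborFinset x).card = 1)
    have hyb : y = b := by
      have : b ∈ G.neighborFinset x := by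
        rw [SimpleGraph.mem_neighborFinset]; exact hbx.symm
      rw [hy] at this
      exact (Finset.mem_singleton.mp this).symm
    constructor
    · intro h
      have : u ∈ G.neighborFinset x := by
        rw [SimpleGraph.mem_neighborFinset]; exact h.symm
      rw [hy, hyb] at this
      simpa using this
    · rintro rfl
      exact hbx
  have hna := hnbr a hba
  have hnc := hnbr c hbc
  -- now the kernel vector
  intro hU
  obtain ⟨hi⟩ := hU.nonempty_invertible
  set M := nbhdMatrix Gᶜ with hM
  have hMentry : ∀ u j, M u j = if G.Adj u j then 0 else 1 := by
    intro u j
    rw [hM, nbhdMatrix]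
    by_cases h : G.Adj u j
    · have huj : u ≠ j := G.ne_of_adj h
      simp [Matrix.of_apply, h, huj, SimpleGraph.compl_adj]
    · by_cases he : u = j
      · simp [Matrix.of_apply, he, h]
      · simp [Matrix.of_apply, he, h, SimpleGraph.compl_adj]
  set w : Fin n → ZMod 2 := Pi.single a 1 + Pi.single c 1 with hw
  have hMw : M *ᵥ w = 0 := by
    rw [hw, Matrix.mulVec_add, Matrix.mulVec_single, Matrix.mulVec_single]
    funext u
    simp only [Pi.add_apply, Pi.zero_apply, mul_one, MulOpposite.op_one, one_smul, Matrix.col_apply]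
    rw [hMentry, hMentry]
    by_cases hub : u = b
    · subst hub
      simp [hba, hbc]
    · have h1 : ¬ G.Adj u a := fun h => hub ((hna u).mp h)
      have h2 : ¬ G.Adj u c := fun h => hub ((hnc u).mp h)
      simp [h1, h2]
      decide
  have hw0 : w = 0 := by
    have := Matrix.mulVec_injective_of_invertible M
    apply this
    rw [hMw, Matrix.mulVec_zero]
  have : w a = 0 := by rw [hw0]; rfl
  rw [hw] at this
  rw [Pi.add_apply, Pi.single_eq_same, Pi.single_eq_of_ne hac, add_zero] at this
  exact one_ne_zero this


/-- For every `n ≥ 3`, `E^n_1 = 0`: there is no graph with `n` vertices and excess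
degree `1` whose complement has a universally solvable game of Lights Out. -/
theorem numExcess_one_eq_zero (n : ℕ) (hn : 3 ≤ n) : numExcess n 1 = 0 := by
  have hempty : IsEmpty {G : SimpleGraph (Fin n) //
      excessDegree G = ((1 : ℕ) : ℤ) ∧ UniversallySolvable Gᶜ} := by
    constructor
    rintro ⟨G, hG, hU⟩
    exact key G (by exact_mod_cast hG) hU
  have h2 : IsEmpty (Quotient (isoSetoid fun G : SimpleGraph (Fin n) =>
      excessDegree G = ((1 : ℕ) : ℤ) ∧ UniversallySolvable Gᶜ)) :=
    ⟨fun q => Quotient.inductionOn q (fun g => hempty.elim g)⟩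
  rw [numExcess]
  exact @Nat.card_of_isEmpty _ h2
end

section
/- For every integer n ≥ 6, E^n_2 = 1; that is, there is exactly one isomorphism class of graphs Γ with n vertices and excess degree 2 such that Lights Out is universally solvable on the complement graph Γ^C. -/
open Finset in
open scoped Classical in
lemma nbhd_mulVec {n : ℕ} (G : SimpleGraph (Fin n)) (x : Fin n → ZMod 2) (w : Fin n) :
    (nbhdMatrix Gᶜ).mulVec x w = (∑ u, x u) - ∑ u ∈ G.neighborFinset w, x u := by
  have h1 : ∀ j, nbhdMatrix Gᶜ w j = if G.Adj w j then 0 else 1 := by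
    intro j
    simp only [nbhdMatrix, Matrix.of_apply, SimpleGraph.compl_adj]
    by_cases h : w = j
    · subst h; simp
    · by_cases h2 : G.Adj w j <;> simp [h, h2, Ne.symm h]
  unfold Matrix.mulVec dotProduct
  simp_rw [h1, ite_mul, zero_mul, one_mul]
  rw [Finset.sum_ite]
  rw [SimpleGraph.neighborFinset_eq_filter]
  rw [← Finset.sum_filter_add_sum_filter_not Finset.univ (fun j => G.Adj w j) x]
  simp

open Finset in
open scoped Classical in
lemma solvable_iff {n : ℕ} (G : SimpleGraph (Fin n)) :
    UniversallySolvable Gᶜ ↔ ∀ x : Fin n → ZMod 2,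
      (∀ w : Fin n, (∑ u ∈ G.neighborFinset w, x u) = ∑ u, x u) → x = 0 := by
  constructor
  · intro h x hx
    have hinj := Matrix.mulVec_injective_iff_isUnit.mpr h
    apply hinj
    rw [Matrix.mulVec_zero]
    funext w
    rw [nbhd_mulVec, hx, sub_self]; rfl
  · intro hker
    rw [UniversallySolvable, ← Matrix.mulVec_injective_iff_isUnit]
    intro x y hxy
    have h0 : (nbhdMatrix Gᶜ).mulVec (x - y) = 0 := by
      rw [Matrix.mulVec_sub, hxy, sub_self]
    have := hker (x - y) (fun w => by
      have hw := congrFun h0 w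
      rw [nbhd_mulVec] at hw
      exact (sub_eq_zero.mp hw).symm)
    exact sub_eq_zero.mp this

open Finset in
open scoped Classical in
lemma nbhd_injective {n : ℕ} (G : SimpleGraph (Fin n))
    (h : ∀ x : Fin n → ZMod 2,
      (∀ w : Fin n, (∑ u ∈ G.neighborFinset w, x u) = ∑ u, x u) → x = 0) :
    ∀ u v : Fin n, G.neighborFinset u = G.neighborFinset v → u = v := by
  intro u v huv
  by_contra hne
  set x : Fin n → ZMod 2 := fun z => (if z = u then 1 else 0) + (if z = v then 1 else 0) with hx
  have hsum : ∀ t : Finset (Fin n), ∑ z ∈ t, x z =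
      (if u ∈ t then (1:ZMod 2) else 0) + (if v ∈ t then 1 else 0) := by
    intro t
    rw [hx]
    rw [Finset.sum_add_distrib, Finset.sum_ite_eq' t u (fun _ => (1:ZMod 2)),
      Finset.sum_ite_eq' t v (fun _ => (1:ZMod 2))]
  have hx0 : x = 0 := by
    apply h
    intro w
    rw [hsum, hsum]
    have hmem : (u ∈ G.neighborFinset w) ↔ (v ∈ G.neighborFinset w) := by
      have h2 : w ∈ G.neighborFinset u ↔ w ∈ G.neighborFinset v := by rw [huv]
      simpa [SimpleGraph.mem_neighborFinset, G.adj_comm] using h2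
    rw [if_pos (Finset.mem_univ u), if_pos (Finset.mem_univ v)]
    by_cases hu : u ∈ G.neighborFinset w
    · rw [if_pos hu, if_pos (hmem.mp hu)]
    · rw [if_neg hu, if_neg (fun hh => hu (hmem.mpr hh))]
      decide
  have := congrFun hx0 u
  simp [hx, hne] at this

open Finset in
lemma sum_eq_card_add_two {α : Type} [DecidableEq α] (s : Finset α) (f : α → ℕ)
    (h1 : ∀ v ∈ s, 1 ≤ f v) (h2 : ∑ v ∈ s, f v = s.card + 2) :
    (∃ a ∈ s, f a = 3 ∧ ∀ b ∈ s, b ≠ a → f b = 1) ∨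
    (∃ a ∈ s, ∃ b ∈ s, a ≠ b ∧ f a = 2 ∧ f b = 2 ∧ ∀ c ∈ s, c ≠ a → c ≠ b → f c = 1) := by
  classical
  set t := s.filter (fun v => 2 ≤ f v) with ht
  have hsplit : ∑ v ∈ s, f v = ∑ v ∈ t, f v + ∑ v ∈ s \ t, f v := by
    have h' := Finset.sum_filter_add_sum_filter_not s (fun v => 2 ≤ f v) f
    rw [Finset.filter_not, ← ht] at h'
    omega
  have hone : ∀ v ∈ s \ t, f v = 1 := by
    intro v hv
    rw [Finset.mem_sdiff] at hv
    have h2v : ¬ (2 ≤ f v) := fun hh => hv.2 (Finset.mem_filter.mpr ⟨hv.1, hh⟩)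
    have := h1 v hv.1
    omega
  have hcard2 : s.card = t.card + (s \ t).card := by
    rw [Finset.card_sdiff_of_subset (Finset.filter_subset _ _), ← ht]
    have h3 : t.card ≤ s.card := by
      rw [ht]; exact Finset.card_filter_le s (fun v => 2 ≤ f v)
    omega
  have hsdiff : ∑ v ∈ s \ t, f v = (s \ t).card := by
    rw [Finset.sum_congr rfl hone]; simp
  have htsum : ∑ v ∈ t, f v = t.card + 2 := by omega
  have htle : ∀ v ∈ t, 2 ≤ f v := fun v hv => (Finset.mem_filter.mp hv).2
  have htcard : t.card ≤ 2 := by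
    by_contra hc
    push_neg at hc
    have : 2 * t.card ≤ ∑ v ∈ t, f v := by
      calc 2 * t.card = ∑ _v ∈ t, 2 := by rw [Finset.sum_const]; ring
        _ ≤ _ := Finset.sum_le_sum htle
    omega
  have htpos : 1 ≤ t.card := by
    rcases Nat.eq_zero_or_pos t.card with hc | hc
    · rw [Finset.card_eq_zero.mp hc] at htsum
      simp at htsum
    · exact hc
  interval_cases h : t.card
  · left
    obtain ⟨a, ha⟩ := Finset.card_eq_one.mp h
    refine ⟨a, ?_, ?_, ?_⟩
    · have : a ∈ t := by rw [ha]; exact Finset.mem_singleton_self a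
      exact (Finset.mem_filter.mp this).1
    · rw [ha, Finset.sum_singleton] at htsum; omega
    · intro b hb hba
      apply hone
      rw [Finset.mem_sdiff, ha]
      exact ⟨hb, by simp [hba]⟩
  · right
    obtain ⟨a, b, hab, hab2⟩ := Finset.card_eq_two.mp h
    have has : a ∈ t := by rw [hab2]; simp
    have hbs : b ∈ t := by rw [hab2]; simp
    have hfab : ∑ v ∈ t, f v = f a + f b := by
      rw [hab2, Finset.sum_insert (by simp [hab]), Finset.sum_singleton]
    have h2a := htle a has; have h2b := htle b hbs
    refine ⟨a, (Finset.mem_filter.mp has).1, b, (Finset.mem_filter.mp hbs).1, hab,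
      by omega, by omega, ?_⟩
    intro c hc hca hcb
    apply hone
    rw [Finset.mem_sdiff, hab2]
    exact ⟨hc, by simp [hca, hcb]⟩

open Finset in
open scoped Classical in
lemma ncard_neighborSet {n : ℕ} (G : SimpleGraph (Fin n)) (v : Fin n) :
    (G.neighborSet v).ncard = G.degree v := by
  rw [← SimpleGraph.card_neighborFinset_eq_degree, SimpleGraph.neighborFinset_def,
    ← Set.ncard_coe_finset, Set.coe_toFinset]

open Finset in
open scoped Classical in
lemma edeg_eq {n : ℕ} (G : SimpleGraph (Fin n)) :
    excessDegree G = ((Finset.univ.filter fun v => G.degree v = 0).card : ℤ) - n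
      + ∑ v : Fin n, (G.degree v : ℤ) := by
  unfold excessDegree
  congr 1
  · congr 2
    have : ({v : Fin n | ∀ w, ¬ G.Adj v w} : Set (Fin n))
        = ↑(Finset.univ.filter fun v => G.degree v = 0) := by
      ext v
      simp only [Set.mem_setOf_eq, Finset.coe_filter, Finset.mem_univ, true_and,
        Set.mem_setOf_eq]
      rw [← SimpleGraph.card_neighborFinset_eq_degree, Finset.card_eq_zero,
        Finset.eq_empty_iff_forall_notMem]
      simp [SimpleGraph.mem_neighborFinset]
    rw [this, Set.ncard_coe_finset]
  · exact Finset.sum_congr rfl fun v _ => by rw [ncard_neighborSet]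

open Finset in
open scoped Classical in
/-- Data witnessing that `G` is a path `a-u-v-b` together with a perfect matching
(given by the involution `σ`) on the remaining vertices, with at most one fixed
point (isolated vertex). -/
structure SData {n : ℕ} (G : SimpleGraph (Fin n)) where
  a : Fin n
  u : Fin n
  v : Fin n
  b : Fin n
  σ : Fin n → Fin n
  hau : a ≠ u
  hav : a ≠ v
  hab : a ≠ b
  huv : u ≠ v
  hub : u ≠ b
  hvb : v ≠ b
  hfixP : ∀ x ∈ ({a, u, v, b} : Finset (Fin n)), σ x = x
  hmap : ∀ x, x ∉ ({a, u, v, b} : Finset (Fin n)) → σ x ∉ ({a, u, v, b} : Finset (Fin n))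
  hinv : ∀ x, σ (σ x) = x
  hfix1 : (Finset.univ.filter
    fun x => x ∉ ({a, u, v, b} : Finset (Fin n)) ∧ σ x = x).card ≤ 1
  hadj : ∀ x y, G.Adj x y ↔
    ((x = a ∧ y = u) ∨ (x = u ∧ y = a) ∨ (x = u ∧ y = v) ∨ (x = v ∧ y = u) ∨
     (x = v ∧ y = b) ∨ (x = b ∧ y = v) ∨
     (x ∉ ({a, u, v, b} : Finset (Fin n)) ∧ y ∉ ({a, u, v, b} : Finset (Fin n)) ∧
       x ≠ y ∧ σ x = y))

namespace SData

variable {n : ℕ} {G : SimpleGraph (Fin n)} (d : SData G)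

open Finset
open scoped Classical

/-- The path set -/
noncomputable def P : Finset (Fin n) := {d.a, d.u, d.v, d.b}

lemma mem_P {x : Fin n} : x ∈ d.P ↔ x = d.a ∨ x = d.u ∨ x = d.v ∨ x = d.b := by
  simp [P]

lemma a_mem_P : d.a ∈ d.P := by simp [P]
lemma u_mem_P : d.u ∈ d.P := by simp [P]
lemma v_mem_P : d.v ∈ d.P := by simp [P]
lemma b_mem_P : d.b ∈ d.P := by simp [P]

lemma card_P : d.P.card = 4 := by
  rw [P]
  rw [Finset.card_insert_of_notMem (by simp [d.hau, d.hav, d.hab]),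
    Finset.card_insert_of_notMem (by simp [d.huv, d.hub]),
    Finset.card_insert_of_notMem (by simp [d.hvb]),
    Finset.card_singleton]

lemma nb_a : G.neighborFinset d.a = {d.u} := by
  ext y
  rw [SimpleGraph.mem_neighborFinset, d.hadj]
  simp [d.hau, d.hav, d.hab, (d.a_mem_P : d.a ∈ ({d.a, d.u, d.v, d.b} : Finset (Fin n)))]

lemma nb_u : G.neighborFinset d.u = {d.a, d.v} := by
  ext y
  rw [SimpleGraph.mem_neighborFinset, d.hadj]
  simp [d.hau.symm, d.huv, d.hub, (d.u_mem_P : d.u ∈ ({d.a, d.u, d.v, d.b} : Finset (Fin n)))]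

lemma nb_v : G.neighborFinset d.v = {d.u, d.b} := by
  ext y
  rw [SimpleGraph.mem_neighborFinset, d.hadj]
  simp [d.hav.symm, d.huv.symm, d.hvb, (d.v_mem_P : d.v ∈ ({d.a, d.u, d.v, d.b} : Finset (Fin n)))]

lemma nb_b : G.neighborFinset d.b = {d.v} := by
  ext y
  rw [SimpleGraph.mem_neighborFinset, d.hadj]
  simp [d.hab.symm, d.hub.symm, d.hvb.symm, (d.b_mem_P : d.b ∈ ({d.a, d.u, d.v, d.b} : Finset (Fin n)))]

lemma nb_out {x : Fin n} (hx : x ∉ d.P) :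
    G.neighborFinset x = if d.σ x = x then ∅ else {d.σ x} := by
  have hx' : x ∉ ({d.a, d.u, d.v, d.b} : Finset (Fin n)) := hx
  ext y
  rw [SimpleGraph.mem_neighborFinset, d.hadj]
  have hxa : x ≠ d.a := fun h => hx' (by simp [h])
  have hxu : x ≠ d.u := fun h => hx' (by simp [h])
  have hxv : x ≠ d.v := fun h => hx' (by simp [h])
  have hxb : x ≠ d.b := fun h => hx' (by simp [h])
  by_cases hfix : d.σ x = x
  · simp only [if_pos hfix, Finset.notMem_empty, iff_false]
    rintro (⟨h,_⟩|⟨h,_⟩|⟨h,_⟩|⟨h,_⟩|⟨h,_⟩|⟨h,_⟩|⟨_,_,hne,hσ⟩)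
    · exact hxa h
    · exact hxu h
    · exact hxu h
    · exact hxv h
    · exact hxv h
    · exact hxb h
    · exact hne (hfix ▸ hσ).symm.symm
  · simp only [if_neg hfix, Finset.mem_singleton]
    constructor
    · rintro (⟨h,_⟩|⟨h,_⟩|⟨h,_⟩|⟨h,_⟩|⟨h,_⟩|⟨h,_⟩|⟨_,_,_,hσ⟩)
      · exact absurd h hxa
      · exact absurd h hxu
      · exact absurd h hxu
      · exact absurd h hxv
      · exact absurd h hxv
      · exact absurd h hxb
      · exact hσ.symm
    · intro h
      subst h
      exact Or.inr (Or.inr (Or.inr (Or.inr (Or.inr (Or.inr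
        ⟨hx', d.hmap x hx', fun hh => hfix hh.symm, rfl⟩)))))

lemma deg_a : G.degree d.a = 1 := by
  rw [← SimpleGraph.card_neighborFinset_eq_degree, d.nb_a, Finset.card_singleton]

lemma deg_u : G.degree d.u = 2 := by
  rw [← SimpleGraph.card_neighborFinset_eq_degree, d.nb_u]
  rw [Finset.card_insert_of_notMem (by simp [d.hav]), Finset.card_singleton]

lemma deg_v : G.degree d.v = 2 := by
  rw [← SimpleGraph.card_neighborFinset_eq_degree, d.nb_v]
  rw [Finset.card_insert_of_notMem (by simp [d.hub]), Finset.card_singleton]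

lemma deg_b : G.degree d.b = 1 := by
  rw [← SimpleGraph.card_neighborFinset_eq_degree, d.nb_b, Finset.card_singleton]

lemma deg_out {x : Fin n} (hx : x ∉ d.P) :
    G.degree x = if d.σ x = x then 0 else 1 := by
  rw [← SimpleGraph.card_neighborFinset_eq_degree, d.nb_out hx]
  by_cases h : d.σ x = x <;> simp [h]

end SData

namespace SData

variable {n : ℕ} {G : SimpleGraph (Fin n)} (d : SData G)

open Finset
open scoped Classical

lemma isolated_filter_eq :
    (Finset.univ.filter fun x : Fin n => G.degree x = 0)
      = (Finset.univ.filter fun x => x ∉ d.P ∧ d.σ x = x) := by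
  apply Finset.filter_congr
  intro x _
  constructor
  · intro h0
    have hxP : x ∉ d.P := by
      intro hxP
      rcases d.mem_P.mp hxP with h | h | h | h
      · rw [h, d.deg_a] at h0; omega
      · rw [h, d.deg_u] at h0; omega
      · rw [h, d.deg_v] at h0; omega
      · rw [h, d.deg_b] at h0; omega
    refine ⟨hxP, ?_⟩
    by_contra hfix
    rw [d.deg_out hxP, if_neg hfix] at h0
    omega
  · rintro ⟨hxP, hfix⟩
    rw [d.deg_out hxP, if_pos hfix]

lemma filter_fix_eq :
    (Finset.univ.filter fun x : Fin n => x ∉ d.P ∧ d.σ x = x)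
      = (Finset.univ \ d.P).filter (fun x => d.σ x = x) := by
  ext x
  simp only [Finset.mem_filter, Finset.mem_sdiff, Finset.mem_univ, true_and]

lemma hn4 (hn : 4 ≤ n) : (Finset.univ \ d.P).card = n - 4 := by
  rw [Finset.card_sdiff_of_subset (Finset.subset_univ _), d.card_P, Finset.card_univ, Fintype.card_fin]

lemma sum_degrees :
    (∑ x : Fin n, (G.degree x : ℤ))
      = 6 + (((Finset.univ \ d.P).card : ℤ))
        - ((Finset.univ.filter fun x => x ∉ d.P ∧ d.σ x = x).card : ℤ) := by
  have hsub : d.P ⊆ Finset.univ := Finset.subset_univ _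
  rw [← Finset.sum_sdiff hsub]
  have hP6 : ∑ x ∈ d.P, (G.degree x : ℤ) = 6 := by
    rw [SData.P]
    rw [Finset.sum_insert (by simp [d.hau, d.hav, d.hab]),
      Finset.sum_insert (by simp [d.huv, d.hub]),
      Finset.sum_insert (by simp [d.hvb]),
      Finset.sum_singleton, d.deg_a, d.deg_u, d.deg_v, d.deg_b]
    norm_num
  have hdeg : ∀ x ∈ Finset.univ \ d.P, (G.degree x : ℤ) = if d.σ x = x then 0 else 1 :=
    fun x hx => by
      rw [d.deg_out (Finset.mem_sdiff.mp hx).2]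
      by_cases h : d.σ x = x <;> simp [h]
  have hSsum : ∑ x ∈ Finset.univ \ d.P, (G.degree x : ℤ)
      = (((Finset.univ \ d.P).filter fun x => ¬ d.σ x = x).card : ℤ) := by
    rw [Finset.sum_congr rfl hdeg, Finset.sum_ite]
    simp
  have hsplit : ((Finset.univ \ d.P).filter fun x => d.σ x = x).card
      + ((Finset.univ \ d.P).filter fun x => ¬ d.σ x = x).card
      = (Finset.univ \ d.P).card :=
    Finset.card_filter_add_card_filter_not _
  rw [hP6, hSsum, d.filter_fix_eq]
  push_cast
  omega

include d in
lemma edeg_two (hn : 4 ≤ n) : excessDegree G = 2 := by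
  rw [edeg_eq, d.isolated_filter_eq, d.sum_degrees, d.hn4 hn]
  have h4 : (4:ℤ) ≤ (n:ℤ) := by exact_mod_cast hn
  push_cast
  omega

end SData


namespace SData

variable {n : ℕ} {G : SimpleGraph (Fin n)} (d : SData G)

open Finset
open scoped Classical

lemma add_self : ∀ t : ZMod 2, t + t = 0 := by decide

include d in
lemma solvable : UniversallySolvable Gᶜ := by
  rw [solvable_iff]
  intro x hx
  set s : ZMod 2 := ∑ z, x z with hs
  -- basic coordinate equations
  have h1 : x d.u = s := by have := hx d.a; rwa [d.nb_a, Finset.sum_singleton] at this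
  have h2 : x d.v = s := by have := hx d.b; rwa [d.nb_b, Finset.sum_singleton] at this
  have h3 : x d.a + x d.v = s := by
    have := hx d.u; rwa [d.nb_u, Finset.sum_pair d.hav] at this
  have h4 : x d.u + x d.b = s := by
    have := hx d.v; rwa [d.nb_v, Finset.sum_pair d.hub] at this
  have ha0 : x d.a = 0 := by linear_combination h3 - h2
  have hb0 : x d.b = 0 := by linear_combination h4 - h1
  -- values off P (non-fixed)
  have hout : ∀ z, z ∉ d.P → d.σ z ≠ z → x z = s := by
    intro z hz hfz
    have hσz : d.σ z ∉ d.P := d.hmap z hz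
    have hσfix : d.σ (d.σ z) ≠ d.σ z := by
      rw [d.hinv z]; exact fun h => hfz h.symm
    have := hx (d.σ z)
    rw [d.nb_out hσz, if_neg hσfix, d.hinv z, Finset.sum_singleton] at this
    exact this
  -- sum over P is 0
  have hPsum : ∑ z ∈ d.P, x z = 0 := by
    rw [SData.P]
    rw [Finset.sum_insert (by simp [d.hau, d.hav, d.hab]),
      Finset.sum_insert (by simp [d.huv, d.hub]),
      Finset.sum_insert (by simp [d.hvb]),
      Finset.sum_singleton, ha0, hb0, h1, h2]
    linear_combination add_self s
  -- s = 0
  have hs0 : s = 0 := by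
    by_cases hex : ∃ w, w ∉ d.P ∧ d.σ w = w
    · obtain ⟨w, hwP, hwf⟩ := hex
      have := hx w
      rw [d.nb_out hwP, if_pos hwf, Finset.sum_empty] at this
      exact this.symm
    · push_neg at hex
      have hSsum : ∑ z ∈ Finset.univ \ d.P, x z = 0 := by
        apply Finset.sum_involution (fun z _ => d.σ z)
        · intro z hz
          have hzP : z ∉ d.P := (Finset.mem_sdiff.mp hz).2
          rw [hout z hzP (hex z hzP), hout (d.σ z) (d.hmap z hzP) ?_]
          · exact add_self s
          · rw [d.hinv z]; exact fun h => (hex z hzP) h.symm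
        · intro z hz _
          exact hex z (Finset.mem_sdiff.mp hz).2
        · intro z hz
          rw [Finset.mem_sdiff]
          exact ⟨Finset.mem_univ _, d.hmap z (Finset.mem_sdiff.mp hz).2⟩
        · intro z _
          exact d.hinv z
      have : s = ∑ z ∈ d.P, x z + ∑ z ∈ Finset.univ \ d.P, x z := by
        rw [hs, ← Finset.sum_sdiff (Finset.subset_univ d.P)]
        ring
      rw [hPsum, hSsum, add_zero] at this
      exact this
  -- all coordinates are zero
  funext z
  show x z = 0
  by_cases hzP : z ∈ d.P
  · rcases d.mem_P.mp hzP with h | h | h | h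
    · rw [h]; exact ha0
    · rw [h, h1, hs0]
    · rw [h, h2, hs0]
    · rw [h]; exact hb0
  · by_cases hfz : d.σ z = z
    · -- z is the unique fixed point; use the total sum
      have hrest : ∀ w ∈ Finset.univ.erase z, x w = 0 := by
        intro w hw
        have hwz : w ≠ z := (Finset.mem_erase.mp hw).1
        by_cases hwP : w ∈ d.P
        · rcases d.mem_P.mp hwP with h | h | h | h
          · rw [h]; exact ha0
          · rw [h, h1, hs0]
          · rw [h, h2, hs0]
          · rw [h]; exact hb0
        · by_cases hfw : d.σ w = w
          · exfalso
            have hmem1 : z ∈ Finset.univ.filter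
                (fun y => y ∉ (({d.a, d.u, d.v, d.b}) : Finset (Fin n)) ∧ d.σ y = y) := by
              simp only [Finset.mem_filter, Finset.mem_univ, true_and]
              exact ⟨hzP, hfz⟩
            have hmem2 : w ∈ Finset.univ.filter
                (fun y => y ∉ (({d.a, d.u, d.v, d.b}) : Finset (Fin n)) ∧ d.σ y = y) := by
              simp only [Finset.mem_filter, Finset.mem_univ, true_and]
              exact ⟨hwP, hfw⟩
            have := Finset.one_lt_card.mpr ⟨z, hmem1, w, hmem2, fun h => hwz h.symm⟩
            have h1' := d.hfix1
            omega
          · rw [← hs0]; exact hout w hwP hfw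
      have hsum : x z + ∑ w ∈ Finset.univ.erase z, x w = s := by
        rw [hs]; exact Finset.add_sum_erase _ _ (Finset.mem_univ z)
      rw [Finset.sum_eq_zero hrest, add_zero, hs0] at hsum
      exact hsum
    · rw [← hs0]; exact hout z hzP hfz

end SData

open Finset in
open scoped Classical in
lemma classification {n : ℕ} (G : SimpleGraph (Fin n))
    (hedeg : excessDegree G = 2) (hsolv : UniversallySolvable Gᶜ) :
    Nonempty (SData G) := by
  have hker := (solvable_iff G).mp hsolv
  have hinj := nbhd_injective G hker
  have hdegcard : ∀ z : Fin n, (G.neighborFinset z).card = G.degree z :=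
    fun z => SimpleGraph.card_neighborFinset_eq_degree G z
  have hmemN : ∀ z w : Fin n, w ∈ G.neighborFinset z ↔ G.Adj z w := by
    intro z w; rw [SimpleGraph.mem_neighborFinset]
  have hadjdeg : ∀ {z w : Fin n}, G.Adj z w → 1 ≤ G.degree z := by
    intro z w h
    have hm : w ∈ G.neighborFinset z := (hmemN _ _).mpr h
    have h1 : 0 < (G.neighborFinset z).card := Finset.card_pos.mpr ⟨w, hm⟩
    rw [hdegcard] at h1; omega
  have hN1 : ∀ z w : Fin n, G.degree z = 1 → G.Adj z w → G.neighborFinset z = {w} := by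
    intro z w h1 hadj
    obtain ⟨c, hc⟩ := Finset.card_eq_one.mp (by rw [hdegcard]; exact h1)
    have hw : w ∈ G.neighborFinset z := (hmemN _ _).mpr hadj
    rw [hc, Finset.mem_singleton] at hw
    rw [hc, hw]
  -- the set of non-isolated vertices
  set s : Finset (Fin n) := Finset.univ.filter (fun z => ¬ G.degree z = 0) with hs
  have hsum : ∑ z ∈ s, G.degree z = s.card + 2 := by
    rw [edeg_eq] at hedeg
    have hsum0 : ∑ z ∈ s, G.degree z = ∑ z : Fin n, G.degree z := by
      rw [hs]; exact Finset.sum_filter_ne_zero Finset.univ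
    have hcards : (Finset.univ.filter fun z => G.degree z = 0).card + s.card = n := by
      rw [hs]
      have := Finset.card_filter_add_card_filter_not
        (s := (Finset.univ : Finset (Fin n))) (p := fun z => G.degree z = 0)
      rwa [Finset.card_univ, Fintype.card_fin] at this
    have hcast : (∑ z : Fin n, (G.degree z : ℤ)) = ((∑ z : Fin n, G.degree z : ℕ) : ℤ) := by
      push_cast; rfl
    rw [hcast] at hedeg
    omega
  have h1le : ∀ z ∈ s, 1 ≤ G.degree z := by
    intro z hz
    rw [hs, Finset.mem_filter] at hz
    omega
  rcases sum_eq_card_add_two s (fun z => G.degree z) h1le hsum with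
    ⟨w, hws, hw3, hrest⟩ | ⟨u0, hus, v0, hvs, huv, hdu, hdv, hrest⟩
  · -- impossible: a degree-3 vertex
    exfalso
    have hcard : 1 < (G.neighborFinset w).card := by rw [hdegcard]; omega
    obtain ⟨x, hx, y, hy, hxy⟩ := Finset.one_lt_card.mp hcard
    have hleaf : ∀ c : Fin n, c ∈ G.neighborFinset w → G.neighborFinset c = {w} := by
      intro c hc
      have hadj : G.Adj w c := (hmemN _ _).mp hc
      have hadj' : G.Adj c w := hadj.symm
      have hcs : c ∈ s := by
        rw [hs, Finset.mem_filter]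
        exact ⟨Finset.mem_univ _, by have := hadjdeg hadj'; omega⟩
      have hcw : c ≠ w := fun h => (G.irrefl (h ▸ hadj' : G.Adj w w))
      exact hN1 c w (hrest c hcs hcw) hadj'
    exact hxy (hinj x y ((hleaf x hx).trans (hleaf y hy).symm))
  · -- two degree-2 vertices u0 v0
    have hleaf : ∀ c w : Fin n, G.Adj c w → c ≠ u0 → c ≠ v0 → G.neighborFinset c = {w} := by
      intro c w hadj hcu hcv
      have hcs : c ∈ s := by
        rw [hs, Finset.mem_filter]
        exact ⟨Finset.mem_univ _, by have := hadjdeg hadj; omega⟩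
      exact hN1 c w (hrest c hcs hcu hcv) hadj
    -- u0 and v0 are adjacent
    have hadjuv : G.Adj u0 v0 := by
      by_contra hno
      have hcard : 1 < (G.neighborFinset u0).card := by rw [hdegcard]; omega
      obtain ⟨x, hx, y, hy, hxy⟩ := Finset.one_lt_card.mp hcard
      have key : ∀ c : Fin n, c ∈ G.neighborFinset u0 → G.neighborFinset c = {u0} := by
        intro c hc
        have hadj : G.Adj u0 c := (hmemN _ _).mp hc
        have hcu : c ≠ u0 := fun h => (G.irrefl (h ▸ hadj : G.Adj u0 u0))
        have hcv : c ≠ v0 := fun h => hno (h ▸ hadj)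
        exact hleaf c u0 hadj.symm hcu hcv
      exact hxy (hinj x y ((key x hx).trans (key y hy).symm))
    -- extract a0
    have hvmem : v0 ∈ G.neighborFinset u0 := (hmemN _ _).mpr hadjuv
    have herase : ((G.neighborFinset u0).erase v0).card = 1 := by
      rw [Finset.card_erase_of_mem hvmem, hdegcard, hdu]
    obtain ⟨a0, ha0⟩ := Finset.card_eq_one.mp herase
    have ha0mem : a0 ∈ (G.neighborFinset u0).erase v0 := by rw [ha0]; exact Finset.mem_singleton_self _
    have ha0v : a0 ≠ v0 := (Finset.mem_erase.mp ha0mem).1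
    have ha0adj : G.Adj u0 a0 := (hmemN _ _).mp (Finset.mem_of_mem_erase ha0mem)
    have ha0u : a0 ≠ u0 := fun h => (G.irrefl (h ▸ ha0adj : G.Adj u0 u0))
    have hNu : G.neighborFinset u0 = {v0, a0} := by
      rw [← Finset.insert_erase hvmem, ha0]
    have hNa : G.neighborFinset a0 = {u0} := hleaf a0 u0 ha0adj.symm ha0u ha0v
    -- extract b0
    have humem : u0 ∈ G.neighborFinset v0 := (hmemN _ _).mpr hadjuv.symm
    have herase' : ((G.neighborFinset v0).erase u0).card = 1 := by
      rw [Finset.card_erase_of_mem humem, hdegcard, hdv]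
    obtain ⟨b0, hb0⟩ := Finset.card_eq_one.mp herase'
    have hb0mem : b0 ∈ (G.neighborFinset v0).erase u0 := by rw [hb0]; exact Finset.mem_singleton_self _
    have hb0u : b0 ≠ u0 := (Finset.mem_erase.mp hb0mem).1
    have hb0adj : G.Adj v0 b0 := (hmemN _ _).mp (Finset.mem_of_mem_erase hb0mem)
    have hb0v : b0 ≠ v0 := fun h => (G.irrefl (h ▸ hb0adj : G.Adj v0 v0))
    have hNv : G.neighborFinset v0 = {u0, b0} := by
      rw [← Finset.insert_erase humem, hb0]
    have hNb : G.neighborFinset b0 = {v0} := hleaf b0 v0 hb0adj.symm hb0u hb0v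
    have hab : a0 ≠ b0 := by
      intro h
      have : ({u0} : Finset (Fin n)) = {v0} := by rw [← hNa, h, hNb]
      exact huv (Finset.singleton_injective this)
    -- the path set
    set Pf : Finset (Fin n) := {a0, u0, v0, b0} with hPf
    have hmemPf : ∀ z : Fin n, z ∈ Pf ↔ z = a0 ∨ z = u0 ∨ z = v0 ∨ z = b0 := by
      intro z; rw [hPf]; simp
    -- structure off the path
    have hgoodnbr : ∀ z w : Fin n, z ∉ Pf → G.Adj z w →
        w ∉ Pf ∧ G.neighborFinset z = {w} ∧ G.neighborFinset w = {z} := by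
      intro z w hz hadj
      have hzu : z ≠ u0 := fun h => hz ((hmemPf z).mpr (Or.inr (Or.inl h)))
      have hzv : z ≠ v0 := fun h => hz ((hmemPf z).mpr (Or.inr (Or.inr (Or.inl h))))
      have hNz : G.neighborFinset z = {w} := hleaf z w hadj hzu hzv
      have hzw : z ∈ G.neighborFinset w := (hmemN _ _).mpr hadj.symm
      have hwa : w ≠ a0 := by
        intro h; rw [h, hNa, Finset.mem_singleton] at hzw; exact hzu hzw
      have hwb : w ≠ b0 := by
        intro h; rw [h, hNb, Finset.mem_singleton] at hzw; exact hzv hzw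
      have hwu : w ≠ u0 := by
        intro h
        rw [h, hNu] at hzw
        rcases Finset.mem_insert.mp hzw with h' | h'
        · exact hzv h'
        · exact hz ((hmemPf z).mpr (Or.inl (Finset.mem_singleton.mp h')))
      have hwv : w ≠ v0 := by
        intro h
        rw [h, hNv] at hzw
        rcases Finset.mem_insert.mp hzw with h' | h'
        · exact hzu h'
        · exact hz ((hmemPf z).mpr (Or.inr (Or.inr (Or.inr (Finset.mem_singleton.mp h')))))
      have hwPf : w ∉ Pf := by
        rw [hmemPf]; push_neg; exact ⟨hwa, hwu, hwv, hwb⟩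
      have hwz : w ≠ u0 ∧ w ≠ v0 := ⟨hwu, hwv⟩
      exact ⟨hwPf, hNz, hleaf w z hadj.symm hwu hwv⟩
    -- the involution
    set σ : Fin n → Fin n :=
      fun z => if h : z ∉ Pf ∧ ∃ w, G.Adj z w then h.2.choose else z with hσ
    have hσval : ∀ z w : Fin n, z ∉ Pf → G.Adj z w → σ z = w := by
      intro z w hz hadj
      have hex : ∃ w', G.Adj z w' := ⟨w, hadj⟩
      have : σ z = hex.choose := by rw [hσ]; exact dif_pos ⟨hz, hex⟩
      rw [this]
      have hchoose : G.Adj z hex.choose := hex.choose_spec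
      have hNz := (hgoodnbr z w hz hadj).2.1
      have := (hmemN _ _).mpr hchoose
      rw [hNz, Finset.mem_singleton] at this
      exact this
    have hσfix : ∀ z : Fin n, (z ∈ Pf ∨ ¬ ∃ w, G.Adj z w) → σ z = z := by
      intro z hz
      rw [hσ]
      apply dif_neg
      rintro ⟨h1, h2⟩
      rcases hz with h | h
      · exact h1 h
      · exact h h2
    refine ⟨⟨a0, u0, v0, b0, σ, ha0u, ha0v, hab, huv,
      (fun h => hb0u h.symm), (fun h => hb0v h.symm), ?_, ?_, ?_, ?_, ?_⟩⟩
    · -- hfixP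
      intro x hx
      apply hσfix
      left
      rwa [← hPf] at hx
    · -- hmap
      intro z hz
      rw [← hPf] at hz ⊢
      by_cases hex : ∃ w, G.Adj z w
      · obtain ⟨w, hw⟩ := hex
        rw [hσval z w hz hw]
        exact (hgoodnbr z w hz hw).1
      · rw [hσfix z (Or.inr hex)]
        exact hz
    · -- hinv
      intro z
      by_cases hzP : z ∈ Pf
      · rw [hσfix z (Or.inl hzP), hσfix z (Or.inl hzP)]
      · by_cases hex : ∃ w, G.Adj z w
        · obtain ⟨w, hw⟩ := hex
          rw [hσval z w hzP hw]
          exact hσval w z (hgoodnbr z w hzP hw).1 hw.symm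
        · rw [hσfix z (Or.inr hex), hσfix z (Or.inr hex)]
    · -- hfix1
      apply Finset.card_le_one.mpr
      intro x hx y hy
      simp only [Finset.mem_filter, Finset.mem_univ, true_and] at hx hy
      rw [← hPf] at hx hy
      obtain ⟨hxP, hxfix⟩ := hx
      obtain ⟨hyP, hyfix⟩ := hy
      have hempty : ∀ z : Fin n, z ∉ Pf → σ z = z → G.neighborFinset z = ∅ := by
        intro z hzP hzfix
        apply Finset.eq_empty_iff_forall_notMem.mpr
        intro w hw
        have hadj : G.Adj z w := (hmemN _ _).mp hw
        have hzw : z = w := by rw [← hzfix, hσval z w hzP hadj]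
        subst hzw
        exact G.irrefl hadj
      exact hinj x y ((hempty x hxP hxfix).trans (hempty y hyP hyfix).symm)
    · -- hadj
      intro x y
      constructor
      · intro hAdj
        by_cases hxP : x ∈ Pf
        · rcases (hmemPf x).mp hxP with h | h | h | h
          · have hy : y ∈ G.neighborFinset a0 := by rw [← h]; exact (hmemN _ _).mpr hAdj
            rw [hNa, Finset.mem_singleton] at hy
            exact Or.inl ⟨h, hy⟩
          · have hy : y ∈ G.neighborFinset u0 := by rw [← h]; exact (hmemN _ _).mpr hAdj
            rw [hNu] at hy
            rcases Finset.mem_insert.mp hy with h' | h'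
            · exact Or.inr (Or.inr (Or.inl ⟨h, h'⟩))
            · exact Or.inr (Or.inl ⟨h, Finset.mem_singleton.mp h'⟩)
          · have hy : y ∈ G.neighborFinset v0 := by rw [← h]; exact (hmemN _ _).mpr hAdj
            rw [hNv] at hy
            rcases Finset.mem_insert.mp hy with h' | h'
            · exact Or.inr (Or.inr (Or.inr (Or.inl ⟨h, h'⟩)))
            · exact Or.inr (Or.inr (Or.inr (Or.inr (Or.inl ⟨h, Finset.mem_singleton.mp h'⟩))))
          · have hy : y ∈ G.neighborFinset b0 := by rw [← h]; exact (hmemN _ _).mpr hAdj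
            rw [hNb, Finset.mem_singleton] at hy
            exact Or.inr (Or.inr (Or.inr (Or.inr (Or.inr (Or.inl ⟨h, hy⟩)))))
        · obtain ⟨hyP, _, _⟩ := hgoodnbr x y hxP hAdj
          refine Or.inr (Or.inr (Or.inr (Or.inr (Or.inr (Or.inr
            ⟨?_, ?_, G.ne_of_adj hAdj, hσval x y hxP hAdj⟩)))))
          · rwa [← hPf]
          · rwa [← hPf]
      · rintro (⟨hx, hy⟩ | ⟨hx, hy⟩ | ⟨hx, hy⟩ | ⟨hx, hy⟩ | ⟨hx, hy⟩ | ⟨hx, hy⟩ |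
          ⟨hx, hy, hne, hσxy⟩)
        · rw [hx, hy]; exact ha0adj.symm
        · rw [hx, hy]; exact ha0adj
        · rw [hx, hy]; exact hadjuv
        · rw [hx, hy]; exact hadjuv.symm
        · rw [hx, hy]; exact hb0adj
        · rw [hx, hy]; exact hb0adj.symm
        · rw [← hPf] at hx hy
          by_cases hex : ∃ w, G.Adj x w
          · obtain ⟨w, hw⟩ := hex
            have hyw : y = w := by rw [← hσxy, hσval x w hx hw]
            rw [hyw]; exact hw
          · exfalso
            apply hne
            rw [← hσxy, hσfix x (Or.inr hex)]

open Finset in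
open scoped Classical in
lemma cycleType_of_involution {α : Type} [Fintype α] [DecidableEq α]
    (σ : Equiv.Perm α) (hσ : ∀ x, σ (σ x) = x) :
    σ.cycleType = Multiset.replicate σ.cycleType.card 2 := by
  apply (Multiset.eq_replicate_card).mpr
  intro c hc
  have h2 : 2 ≤ c := Equiv.Perm.two_le_of_mem_cycleType hc
  have hord : orderOf σ ∣ 2 := by
    apply orderOf_dvd_of_pow_eq_one
    ext x
    simp [pow_succ, hσ x]
  have hdvd : c ∣ 2 := dvd_trans (by rw [← Equiv.Perm.lcm_cycleType]; exact Multiset.dvd_lcm hc) hord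
  have hle : c ≤ 2 := Nat.le_of_dvd (by norm_num) hdvd
  omega

open Finset in
open scoped Classical in
lemma involutions_conj {α β : Type} [Fintype α] [DecidableEq α] [Fintype β] [DecidableEq β]
    (hcard : Fintype.card α = Fintype.card β)
    (σ : Equiv.Perm α) (τ : Equiv.Perm β)
    (hσ : ∀ x, σ (σ x) = x) (hτ : ∀ y, τ (τ y) = y)
    (hfix : Fintype.card {x // σ x = x} = Fintype.card {y // τ y = y}) :
    ∃ e : α ≃ β, ∀ x, e (σ x) = τ (e x) := by
  set e0 : α ≃ β := Fintype.equivOfCardEq hcard with he0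
  set τ' : Equiv.Perm α := (Equiv.permCongr e0.symm) τ with hτ'
  have hτ'app : ∀ x, τ' x = e0.symm (τ (e0 x)) := fun x => rfl
  have hτ'inv : ∀ x, τ' (τ' x) = x := by
    intro x
    rw [hτ'app, hτ'app]
    simp [hτ (e0 x)]
  -- fixed point counts
  have hfix' : Fintype.card {x // τ' x = x} = Fintype.card {y // τ y = y} := by
    apply Fintype.card_congr
    refine ⟨fun p => ⟨e0 p.1, ?_⟩, fun q => ⟨e0.symm q.1, ?_⟩, fun p => by simp, fun q => by simp⟩
    · have := p.2
      rw [hτ'app] at this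
      have := congrArg e0 this
      simpa using this
    · have := q.2
      rw [hτ'app]
      simp [this]
  -- support cards equal
  have hsupcard : ∀ {γ : Type} [Fintype γ] [DecidableEq γ] (π : Equiv.Perm γ),
      π.support.card = Fintype.card γ - Fintype.card {x // π x = x} := by
    intro γ _ _ π
    have h1 : Fintype.card {x // π x = x} = (Finset.univ.filter (fun x => π x = x)).card :=
      Fintype.card_subtype _
    have h2 := Finset.card_filter_add_card_filter_not
      (s := (Finset.univ : Finset γ)) (p := fun x => π x = x)
    have h3 : π.support = Finset.univ.filter (fun x => ¬ π x = x) := by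
      ext x; simp [Equiv.Perm.mem_support]
    rw [h3, Finset.card_univ] at *
    omega
  have hsup : σ.support.card = τ'.support.card := by
    rw [hsupcard σ, hsupcard τ', hfix', hfix, hcard]
  -- cycle types equal
  have hct : σ.cycleType = τ'.cycleType := by
    have c1 := cycleType_of_involution σ hσ
    have c2 := cycleType_of_involution τ' hτ'inv
    have s1 := Equiv.Perm.sum_cycleType σ
    have s2 := Equiv.Perm.sum_cycleType τ'
    rw [c1] at s1
    rw [c2] at s2
    rw [Multiset.sum_replicate, smul_eq_mul] at s1 s2
    have : σ.cycleType.card = τ'.cycleType.card := by omega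
    rw [c1, c2, this]
  obtain ⟨π, hπ⟩ := isConj_iff.mp (Equiv.Perm.isConj_iff_cycleType_eq.mpr hct)
  refine ⟨π.trans e0, fun x => ?_⟩
  have happ : π (σ x) = τ' (π x) := by
    have h := DFunLike.congr_fun hπ (π x)
    simpa using h
  show e0 (π (σ x)) = τ (e0 (π x))
  rw [happ, hτ'app]
  simp

open Finset in
open scoped Classical in
lemma perm_fixed_support {γ : Type} [Fintype γ] [DecidableEq γ] (π : Equiv.Perm γ) :
    Fintype.card γ = Fintype.card {x // π x = x} + π.support.card := by
  have h1 : Fintype.card {x // π x = x} = (Finset.univ.filter (fun x => π x = x)).card :=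
    Fintype.card_subtype _
  have h2 := Finset.card_filter_add_card_filter_not
    (s := (Finset.univ : Finset γ)) (p := fun x => π x = x)
  have h3 : π.support = Finset.univ.filter (fun x => ¬ π x = x) := by
    ext x; simp [Equiv.Perm.mem_support]
  rw [Finset.card_univ] at h2
  rw [h3]
  omega

open Finset in
open scoped Classical in
lemma support_even {γ : Type} [Fintype γ] [DecidableEq γ] (π : Equiv.Perm γ)
    (h : ∀ x, π (π x) = x) : Even π.support.card := by
  have c := cycleType_of_involution π h
  have s := Equiv.Perm.sum_cycleType π
  rw [c, Multiset.sum_replicate, smul_eq_mul] at s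
  exact ⟨π.cycleType.card, by omega⟩

namespace SData

open Finset
open scoped Classical

variable {n : ℕ} {G : SimpleGraph (Fin n)}

/-- The involution restricted to the complement of the path, as a permutation. -/
noncomputable def perm (d : SData G) : Equiv.Perm {x : Fin n // x ∉ d.P} :=
  Function.Involutive.toPerm
    (fun z => ⟨d.σ z.1, d.hmap z.1 z.2⟩)
    (fun z => Subtype.ext (d.hinv z.1))

lemma perm_apply (d : SData G) (z : {x : Fin n // x ∉ d.P}) :
    (d.perm z : Fin n) = d.σ z.1 := rfl

lemma card_compl (d : SData G) : Fintype.card {x : Fin n // x ∉ d.P} = n - 4 := by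
  rw [Fintype.card_subtype_compl]
  congr 1
  · rw [Fintype.card_fin]
  · exact (Fintype.card_coe d.P).trans d.card_P

lemma fixed_card (d : SData G) :
    Fintype.card {z : {x : Fin n // x ∉ d.P} // d.perm z = z}
      = (Finset.univ.filter fun x : Fin n => x ∉ d.P ∧ d.σ x = x).card := by
  rw [← Fintype.card_subtype]
  apply Fintype.card_congr
  have e1 : {z : {x : Fin n // x ∉ d.P} // d.perm z = z}
      ≃ {z : {x : Fin n // x ∉ d.P} // d.σ z.1 = z.1} := by
    apply Equiv.subtypeEquivRight
    intro z
    constructor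
    · intro h; exact congrArg Subtype.val h
    · intro h; exact Subtype.ext h
  exact e1.trans (Equiv.subtypeSubtypeEquivSubtypeInter (fun x => x ∉ d.P) (fun x => d.σ x = x))

lemma fixed_count (d : SData G) (hn : 4 ≤ n) :
    Fintype.card {z : {x : Fin n // x ∉ d.P} // d.perm z = z} = (n - 4) % 2 := by
  have h1 := perm_fixed_support d.perm
  have h2 := support_even d.perm (fun z => by
    have := d.hinv z.1
    exact Subtype.ext this)
  have h3 := d.fixed_card
  have h4 : (Finset.univ.filter fun x : Fin n => x ∉ d.P ∧ d.σ x = x).card ≤ 1 := d.hfix1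
  obtain ⟨k, hk⟩ := h2
  rw [d.card_compl] at h1
  omega


lemma iso {H : SimpleGraph (Fin n)} (dG : SData G) (dH : SData H) (hn : 4 ≤ n) :
    Nonempty (G ≃g H) := by
  obtain ⟨e, he⟩ := involutions_conj
    (by rw [dG.card_compl, dH.card_compl])
    dG.perm dH.perm
    (fun z => Subtype.ext (dG.hinv z.1))
    (fun z => Subtype.ext (dH.hinv z.1))
    (by rw [dG.fixed_count hn, dH.fixed_count hn])
  set F : Fin n → Fin n := fun x =>
    if hx : x ∈ dG.P then
      (if x = dG.a then dH.a else if x = dG.u then dH.u else if x = dG.v then dH.v else dH.b)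
    else (e ⟨x, hx⟩).1 with hF
  set F' : Fin n → Fin n := fun y =>
    if hy : y ∈ dH.P then
      (if y = dH.a then dG.a else if y = dH.u then dG.u else if y = dH.v then dG.v else dG.b)
    else (e.symm ⟨y, hy⟩).1 with hF'
  have hFa : F dG.a = dH.a := by simp [hF, dG.a_mem_P]
  have hFu : F dG.u = dH.u := by simp [hF, dG.u_mem_P, Ne.symm dG.hau]
  have hFv : F dG.v = dH.v := by simp [hF, dG.v_mem_P, Ne.symm dG.hav, Ne.symm dG.huv]
  have hFb : F dG.b = dH.b := by
    simp [hF, dG.b_mem_P, Ne.symm dG.hab, Ne.symm dG.hub, Ne.symm dG.hvb]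
  have hF'a : F' dH.a = dG.a := by simp [hF', dH.a_mem_P]
  have hF'u : F' dH.u = dG.u := by simp [hF', dH.u_mem_P, Ne.symm dH.hau]
  have hF'v : F' dH.v = dG.v := by simp [hF', dH.v_mem_P, Ne.symm dH.hav, Ne.symm dH.huv]
  have hF'b : F' dH.b = dG.b := by
    simp [hF', dH.b_mem_P, Ne.symm dH.hab, Ne.symm dH.hub, Ne.symm dH.hvb]
  have hFout : ∀ (x : Fin n) (hx : x ∉ dG.P), F x = (e ⟨x, hx⟩).1 := fun x hx => dif_neg hx
  have hF'out : ∀ (y : Fin n) (hy : y ∉ dH.P), F' y = (e.symm ⟨y, hy⟩).1 :=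
    fun y hy => dif_neg hy
  have hleft : Function.LeftInverse F' F := by
    intro x
    by_cases hx : x ∈ dG.P
    · rcases dG.mem_P.mp hx with h | h | h | h <;> rw [h]
      · rw [hFa, hF'a]
      · rw [hFu, hF'u]
      · rw [hFv, hF'v]
      · rw [hFb, hF'b]
    · rw [hFout x hx, hF'out _ (e ⟨x, hx⟩).2]
      simp
  have hright : Function.RightInverse F' F := by
    intro y
    by_cases hy : y ∈ dH.P
    · rcases dH.mem_P.mp hy with h | h | h | h <;> rw [h]
      · rw [hF'a, hFa]
      · rw [hF'u, hFu]
      · rw [hF'v, hFv]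
      · rw [hF'b, hFb]
    · rw [hF'out y hy, hFout _ (e.symm ⟨y, hy⟩).2]
      simp
  set E : Fin n ≃ Fin n := ⟨F, F', hleft, hright⟩ with hE
  have hinjF : Function.Injective F := hleft.injective
  have hσF : ∀ (x : Fin n) (hx : x ∉ dG.P), F (dG.σ x) = dH.σ (F x) := by
    intro x hx
    have h1 : dG.σ x ∉ dG.P := dG.hmap x hx
    rw [hFout _ h1, hFout x hx]
    exact congrArg Subtype.val (he ⟨x, hx⟩)
  have hmemF : ∀ x : Fin n, x ∈ dG.P ↔ F x ∈ dH.P := by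
    intro x
    constructor
    · intro hx
      rcases dG.mem_P.mp hx with h | h | h | h <;> rw [h]
      · rw [hFa]; exact dH.a_mem_P
      · rw [hFu]; exact dH.u_mem_P
      · rw [hFv]; exact dH.v_mem_P
      · rw [hFb]; exact dH.b_mem_P
    · intro hFx
      by_contra hx
      rw [hFout x hx] at hFx
      exact (e ⟨x, hx⟩).2 hFx
  have hEqa : ∀ x : Fin n, x = dG.a ↔ F x = dH.a := fun x =>
    ⟨fun h => by rw [h, hFa], fun h => hinjF (by rw [hFa]; exact h)⟩
  have hEqu : ∀ x : Fin n, x = dG.u ↔ F x = dH.u := fun x =>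
    ⟨fun h => by rw [h, hFu], fun h => hinjF (by rw [hFu]; exact h)⟩
  have hEqv : ∀ x : Fin n, x = dG.v ↔ F x = dH.v := fun x =>
    ⟨fun h => by rw [h, hFv], fun h => hinjF (by rw [hFv]; exact h)⟩
  have hEqb : ∀ x : Fin n, x = dG.b ↔ F x = dH.b := fun x =>
    ⟨fun h => by rw [h, hFb], fun h => hinjF (by rw [hFb]; exact h)⟩
  refine ⟨⟨E, ?_⟩⟩
  intro x y
  show H.Adj (F x) (F y) ↔ G.Adj x y
  rw [dH.hadj, dG.hadj]
  constructor
  · rintro (⟨hx, hy⟩ | ⟨hx, hy⟩ | ⟨hx, hy⟩ | ⟨hx, hy⟩ | ⟨hx, hy⟩ | ⟨hx, hy⟩ |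
      ⟨hx, hy, hne, hσ⟩)
    · exact Or.inl ⟨(hEqa x).mpr hx, (hEqu y).mpr hy⟩
    · exact Or.inr (Or.inl ⟨(hEqu x).mpr hx, (hEqa y).mpr hy⟩)
    · exact Or.inr (Or.inr (Or.inl ⟨(hEqu x).mpr hx, (hEqv y).mpr hy⟩))
    · exact Or.inr (Or.inr (Or.inr (Or.inl ⟨(hEqv x).mpr hx, (hEqu y).mpr hy⟩)))
    · exact Or.inr (Or.inr (Or.inr (Or.inr (Or.inl ⟨(hEqv x).mpr hx, (hEqb y).mpr hy⟩))))
    · exact Or.inr (Or.inr (Or.inr (Or.inr (Or.inr (Or.inl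
        ⟨(hEqb x).mpr hx, (hEqv y).mpr hy⟩)))))
    · have hx' : x ∉ dG.P := fun h => hx ((hmemF x).mp h)
      have hy' : y ∉ dG.P := fun h => hy ((hmemF y).mp h)
      refine Or.inr (Or.inr (Or.inr (Or.inr (Or.inr (Or.inr
        ⟨hx', hy', fun h => hne (by rw [h]), ?_⟩)))))
      exact hinjF (by rw [hσF x hx', hσ])
  · rintro (⟨hx, hy⟩ | ⟨hx, hy⟩ | ⟨hx, hy⟩ | ⟨hx, hy⟩ | ⟨hx, hy⟩ | ⟨hx, hy⟩ |
      ⟨hx, hy, hne, hσ⟩)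
    · exact Or.inl ⟨(hEqa x).mp hx, (hEqu y).mp hy⟩
    · exact Or.inr (Or.inl ⟨(hEqu x).mp hx, (hEqa y).mp hy⟩)
    · exact Or.inr (Or.inr (Or.inl ⟨(hEqu x).mp hx, (hEqv y).mp hy⟩))
    · exact Or.inr (Or.inr (Or.inr (Or.inl ⟨(hEqv x).mp hx, (hEqu y).mp hy⟩)))
    · exact Or.inr (Or.inr (Or.inr (Or.inr (Or.inl ⟨(hEqv x).mp hx, (hEqb y).mp hy⟩))))
    · exact Or.inr (Or.inr (Or.inr (Or.inr (Or.inr (Or.inl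
        ⟨(hEqb x).mp hx, (hEqv y).mp hy⟩)))))
    · refine Or.inr (Or.inr (Or.inr (Or.inr (Or.inr (Or.inr
        ⟨fun h => hx ((hmemF x).mpr h), fun h => hy ((hmemF y).mpr h),
          fun h => hne (hinjF h), ?_⟩)))))
      rw [← hσF x hx, hσ]

end SData

def pfun : ℕ → ℕ := fun x => if x % 2 = 0 then x + 1 else x - 1

def modelσ (n : ℕ) : Fin n → Fin n :=
  fun x => if x.val < 4 then x else if h : pfun x.val < n then ⟨pfun x.val, h⟩ else x

lemma pfun_facts (m : ℕ) (hm : 4 ≤ m) : 4 ≤ pfun m ∧ pfun (pfun m) = m ∧ pfun m ≠ m := by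
  by_cases h : m % 2 = 0
  · have h1 : pfun m = m + 1 := by simp [pfun, h]
    have h2 : ¬ (m + 1) % 2 = 0 := by omega
    have h3 : pfun (m + 1) = m := by simp [pfun, h2]
    refine ⟨by omega, by rw [h1, h3], by omega⟩
  · have h1 : pfun m = m - 1 := by simp [pfun, h]
    have h2 : (m - 1) % 2 = 0 := by omega
    have h3 : pfun (m - 1) = m := by simp [pfun, h2]; omega
    refine ⟨by omega, by rw [h1, h3], by omega⟩

lemma modelσ_low {n : ℕ} (x : Fin n) (hx : x.val < 4) : modelσ n x = x := by
  simp [modelσ, hx]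

lemma modelσ_high {n : ℕ} (x : Fin n) (h4 : 4 ≤ x.val) (h : pfun x.val < n) :
    modelσ n x = ⟨pfun x.val, h⟩ := by
  have : ¬ x.val < 4 := by omega
  simp [modelσ, this, h]

lemma modelσ_high' {n : ℕ} (x : Fin n) (h4 : 4 ≤ x.val) (h : ¬ pfun x.val < n) :
    modelσ n x = x := by
  have : ¬ x.val < 4 := by omega
  simp [modelσ, this, h]

lemma modelσ_inv {n : ℕ} (x : Fin n) : modelσ n (modelσ n x) = x := by
  by_cases hx : x.val < 4
  · rw [modelσ_low x hx, modelσ_low x hx]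
  · have h4 : 4 ≤ x.val := by omega
    obtain ⟨hp4, hpp, hpne⟩ := pfun_facts x.val h4
    by_cases h : pfun x.val < n
    · rw [modelσ_high x h4 h]
      have h4' : 4 ≤ (⟨pfun x.val, h⟩ : Fin n).val := hp4
      have h' : pfun (⟨pfun x.val, h⟩ : Fin n).val < n := by
        show pfun (pfun x.val) < n
        rw [hpp]
        exact x.isLt
      rw [modelσ_high _ h4' h']
      apply Fin.ext
      exact hpp
    · rw [modelσ_high' x h4 h, modelσ_high' x h4 h]

lemma modelσ_ge {n : ℕ} (x : Fin n) (h4 : 4 ≤ x.val) : 4 ≤ (modelσ n x).val := by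
  by_cases h : pfun x.val < n
  · rw [modelσ_high x h4 h]
    exact (pfun_facts x.val h4).1
  · rw [modelσ_high' x h4 h]
    exact h4

open Finset in
open scoped Classical in
lemma exists_structured (n : ℕ) (hn : 6 ≤ n) :
    ∃ G : SimpleGraph (Fin n), Nonempty (SData G) := by
  have ha : (4:ℕ) ≤ n := by omega
  refine ⟨⟨fun x y =>
    ((x = (⟨0, by omega⟩ : Fin n) ∧ y = ⟨1, by omega⟩) ∨
     (x = (⟨1, by omega⟩ : Fin n) ∧ y = ⟨0, by omega⟩) ∨
     (x = (⟨1, by omega⟩ : Fin n) ∧ y = ⟨2, by omega⟩) ∨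
     (x = (⟨2, by omega⟩ : Fin n) ∧ y = ⟨1, by omega⟩) ∨
     (x = (⟨2, by omega⟩ : Fin n) ∧ y = ⟨3, by omega⟩) ∨
     (x = (⟨3, by omega⟩ : Fin n) ∧ y = ⟨2, by omega⟩) ∨
     (x ∉ ({⟨0, by omega⟩, ⟨1, by omega⟩, ⟨2, by omega⟩, ⟨3, by omega⟩} : Finset (Fin n)) ∧
      y ∉ ({⟨0, by omega⟩, ⟨1, by omega⟩, ⟨2, by omega⟩, ⟨3, by omega⟩} : Finset (Fin n)) ∧
      x ≠ y ∧ modelσ n x = y)), ?_, ?_⟩, ?_⟩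
  · -- symmetric
    constructor
    intro x y h
    rcases h with ⟨h1,h2⟩|⟨h1,h2⟩|⟨h1,h2⟩|⟨h1,h2⟩|⟨h1,h2⟩|⟨h1,h2⟩|⟨h1,h2,h3,h4⟩
    · exact Or.inr (Or.inl ⟨h2, h1⟩)
    · exact Or.inl ⟨h2, h1⟩
    · exact Or.inr (Or.inr (Or.inr (Or.inl ⟨h2, h1⟩)))
    · exact Or.inr (Or.inr (Or.inl ⟨h2, h1⟩))
    · exact Or.inr (Or.inr (Or.inr (Or.inr (Or.inr (Or.inl ⟨h2, h1⟩)))))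
    · exact Or.inr (Or.inr (Or.inr (Or.inr (Or.inl ⟨h2, h1⟩))))
    · refine Or.inr (Or.inr (Or.inr (Or.inr (Or.inr (Or.inr
        ⟨h2, h1, fun hh => h3 hh.symm, ?_⟩)))))
      rw [← h4, modelσ_inv x]
  · -- irreflexive
    constructor
    intro x h
    rcases h with ⟨h1,h2⟩|⟨h1,h2⟩|⟨h1,h2⟩|⟨h1,h2⟩|⟨h1,h2⟩|⟨h1,h2⟩|⟨h1,h2,h3,h4⟩
    all_goals first
      | (exact h3 rfl)
      | (rw [h1] at h2; exact absurd (congrArg Fin.val h2) (by simp))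
  · -- the SData instance
    have hmemval : ∀ x : Fin n, x ∈
        ({⟨0, by omega⟩, ⟨1, by omega⟩, ⟨2, by omega⟩, ⟨3, by omega⟩} : Finset (Fin n))
        ↔ x.val < 4 := by
      intro x
      simp only [Finset.mem_insert, Finset.mem_singleton, Fin.ext_iff]
      constructor
      · rintro (h | h | h | h) <;> omega
      · intro h
        omega
    refine ⟨⟨⟨0, by omega⟩, ⟨1, by omega⟩, ⟨2, by omega⟩, ⟨3, by omega⟩, modelσ n,
      ?_, ?_, ?_, ?_, ?_, ?_, ?_, ?_, modelσ_inv, ?_, fun x y => Iff.rfl⟩⟩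
    · intro h; exact absurd (congrArg Fin.val h) (by simp)
    · intro h; exact absurd (congrArg Fin.val h) (by simp)
    · intro h; exact absurd (congrArg Fin.val h) (by simp)
    · intro h; exact absurd (congrArg Fin.val h) (by simp)
    · intro h; exact absurd (congrArg Fin.val h) (by simp)
    · intro h; exact absurd (congrArg Fin.val h) (by simp)
    · -- hfixP
      intro x hx
      exact modelσ_low x ((hmemval x).mp hx)
    · -- hmap
      intro x hx hc
      have h4 : 4 ≤ x.val := by
        have := (hmemval x).not.mp hx
        omega
      have := modelσ_ge x h4
      have := (hmemval _).mp hc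
      omega
    · -- hfix1
      apply Finset.card_le_one.mpr
      intro x hx y hy
      simp only [Finset.mem_filter, Finset.mem_univ, true_and] at hx hy
      have hfix : ∀ z : Fin n, ¬ z.val < 4 → modelσ n z = z → z.val = n - 1 := by
        intro z hz hfz
        have h4 : 4 ≤ z.val := by omega
        by_cases h : pfun z.val < n
        · exfalso
          rw [modelσ_high z h4 h] at hfz
          exact (pfun_facts z.val h4).2.2 (congrArg Fin.val hfz)
        · have := z.isLt
          have hz2 : z.val % 2 = 0 := by
            by_contra hodd
            apply h
            have : pfun z.val = z.val - 1 := by simp [pfun, hodd]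
            omega
          have : pfun z.val = z.val + 1 := by simp [pfun, hz2]
          omega
      apply Fin.ext
      rw [hfix x (fun hc => hx.1 ((hmemval x).mpr hc)) hx.2,
        hfix y (fun hc => hy.1 ((hmemval y).mpr hc)) hy.2]

/-- For every `n ≥ 6`, `E^n_2 = 1`: there is exactly one isomorphism class of graphs with
`n` vertices and excess degree `2` whose complement has a universally solvable game of
Lights Out. -/
theorem numExcess_two_eq_one (n : ℕ) (hn : 6 ≤ n) : numExcess n 2 = 1 := by
  have h4 : 4 ≤ n := by omega
  unfold numExcess
  rw [Nat.card_eq_one_iff_unique]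
  constructor
  · constructor
    intro x y
    refine Quotient.inductionOn₂ x y (fun Gs Hs => ?_)
    apply Quotient.sound
    have hG2 : excessDegree Gs.1 = 2 := by
      have := Gs.2.1; simpa using this
    have hH2 : excessDegree Hs.1 = 2 := by
      have := Hs.2.1; simpa using this
    obtain ⟨dG⟩ := classification Gs.1 hG2 Gs.2.2
    obtain ⟨dH⟩ := classification Hs.1 hH2 Hs.2.2
    exact dG.iso dH h4
  · obtain ⟨G, ⟨d⟩⟩ := exists_structured n hn
    exact ⟨Quotient.mk _ ⟨G, ⟨by simpa using d.edeg_two h4, d.solvable⟩⟩⟩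
end
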